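/- arXiv:2305.19799 — 8 statements merged into one kernel-verified Lean document; each statement's English description precedes it below -/
import Mathlib

section
/- Let R, A, B be k-algebras with algebra morphisms ε_A : R → A and ε_B : R → B, and let τ : B ⊗_R A → A ⊗_R B be an R-bilinear map satisfying τ(1 ⊗ a) = a ⊗ 1, τ(b ⊗ 1) = 1 ⊗ b. Then the multiplication μ_τ = (μ_A ⊗ μ_B) ∘ (1 ⊗ τ ⊗ 1) on A ⊗_R B is associative if and only if τ ∘ (μ_B ⊗ μ_A) = (μ_A ⊗ μ_B) ∘ (1 ⊗ τ ⊗ 1) ∘ (τ ⊗ τ) ∘ (1 ⊗ τ ⊗ 1) as maps from B ⊗_R B ⊗_R A ⊗_R A to A ⊗_R B. -/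
open TensorProduct

variable {k R A B : Type*} [Field k] [Ring R] [Ring A] [Ring B]
  [Algebra k R] [Algebra k A] [Algebra k B]

/-- The submodule of `A ⊗ₖ B` of balancing relations over `R`:
`(a · ε_A r) ⊗ b - a ⊗ (ε_B r · b)`.  Quotienting by it produces `A ⊗_R B`,
the tensor product of the right `R`-module `A` and the left `R`-module `B`. -/
noncomputable def balMod (εA : R →ₐ[k] A) (εB : R →ₐ[k] B) : Submodule k (A ⊗[k] B) :=
  Submodule.span k
    {z | ∃ (r : R) (a : A) (b : B), z = (a * εA r) ⊗ₜ[k] b - a ⊗ₜ[k] (εB r * b)}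

/-- The tensor product `A ⊗_R B` over the (possibly noncommutative) `R`-ring structures. -/
abbrev TT (εA : R →ₐ[k] A) (εB : R →ₐ[k] B) : Type _ := (A ⊗[k] B) ⧸ balMod εA εB

/-- The class of the pure tensor `a ⊗ b` in `A ⊗_R B`. -/
noncomputable def qq (εA : R →ₐ[k] A) (εB : R →ₐ[k] B) (a : A) (b : B) : TT εA εB :=
  Submodule.Quotient.mk (a ⊗ₜ[k] b)

/-- Two linear maps out of `TT εA εB` agreeing on all classes of pure tensors agree
everywhere. -/
lemma qq_ext {εA : R →ₐ[k] A} {εB : R →ₐ[k] B} {M : Type*} [AddCommGroup M] [Module k M]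
    (f g : TT εA εB →ₗ[k] M)
    (h : ∀ a b, f (qq εA εB a b) = g (qq εA εB a b)) (x : TT εA εB) : f x = g x := by
  obtain ⟨y, rfl⟩ := Submodule.mkQ_surjective _ x
  have hc : f.comp (balMod εA εB).mkQ = g.comp (balMod εA εB).mkQ :=
    TensorProduct.ext' fun a b => h a b
  exact DFunLike.congr_fun hc y

/-- Induction principle for `TT εA εB`. -/
lemma tt_ind {εA : R →ₐ[k] A} {εB : R →ₐ[k] B} {P : TT εA εB → Prop}
    (h0 : P 0) (hq : ∀ a b, P (qq εA εB a b))
    (hadd : ∀ x y, P x → P y → P (x + y)) (x : TT εA εB) : P x := by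
  obtain ⟨y, rfl⟩ := Submodule.mkQ_surjective _ x
  induction y using TensorProduct.induction_on with
  | zero => simpa using h0
  | tmul a b => exact hq a b
  | add u v hu hv => rw [map_add]; exact hadd _ _ hu hv

/-- Given an `R`-bilinear map `τ : B ⊗_R A → A ⊗_R B` with `τ(1 ⊗ a) = a ⊗ 1` and
`τ(b ⊗ 1) = 1 ⊗ b`, the multiplication `μ_τ = (μ_A ⊗ μ_B) ∘ (1 ⊗ τ ⊗ 1)` on `A ⊗_R B`
is associative iff
`τ ∘ (μ_B ⊗ μ_A) = (μ_A ⊗ μ_B) ∘ (1 ⊗ τ ⊗ 1) ∘ (τ ⊗ τ) ∘ (1 ⊗ τ ⊗ 1)`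
as maps `B ⊗_R B ⊗_R A ⊗_R A → A ⊗_R B`.  Here `Φ a b'` is the map
`x ⊗ y ↦ (a x) ⊗ (y b')`, so that `μ` is `μ_τ`, and `Ψ b a'` is the map
`α ⊗ β ↦ μ (τ (b ⊗ α)) (τ (β ⊗ a'))`, so that the right-hand side of the iff is the
composite `(μ_A ⊗ μ_B) ∘ (1 ⊗ τ ⊗ 1) ∘ (τ ⊗ τ) ∘ (1 ⊗ τ ⊗ 1)`. -/
theorem stmt_2 (εA : R →ₐ[k] A) (εB : R →ₐ[k] B)
    (τ : TT εB εA →ₗ[k] TT εA εB)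
    (hτ1 : ∀ a : A, τ (qq εB εA 1 a) = qq εA εB a 1)
    (hτ2 : ∀ b : B, τ (qq εB εA b 1) = qq εA εB 1 b)
    (μ : TT εA εB →ₗ[k] TT εA εB →ₗ[k] TT εA εB)
    (Φ : A → B → TT εA εB →ₗ[k] TT εA εB)
    (hΦ : ∀ (a : A) (b' : B) (x : A) (y : B),
      Φ a b' (qq εA εB x y) = qq εA εB (a * x) (y * b'))
    (hμ : ∀ (a : A) (b : B) (a' : A) (b' : B),
      μ (qq εA εB a b) (qq εA εB a' b') = Φ a b' (τ (qq εB εA b a')))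
    (Ψ : B → A → TT εA εB →ₗ[k] TT εA εB)
    (hΨ : ∀ (b : B) (a' : A) (α : A) (β : B),
      Ψ b a' (qq εA εB α β) = μ (τ (qq εB εA b α)) (τ (qq εB εA β a'))) :
    (∀ x y z : TT εA εB, μ (μ x y) z = μ x (μ y z)) ↔
    (∀ (b b' : B) (a a' : A),
      τ (qq εB εA (b * b') (a * a')) = Ψ b a' (τ (qq εB εA b' a))) := by
  -- general facts
  have G0 : ∀ t, Φ 1 1 t = t := fun t => by
    simpa using qq_ext (Φ (1 : A) (1 : B)) LinearMap.id (fun x y => by simp [hΦ]) t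
  have G4 : ∀ (b : B) (a : A), μ (qq εA εB 1 b) (qq εA εB a 1) = τ (qq εB εA b a) :=
    fun b a => by rw [hμ]; exact G0 _
  have G1 : ∀ (α : A) (w : TT εA εB), Φ α 1 w = μ (qq εA εB α 1) w := fun α w =>
    qq_ext (Φ α 1) (μ (qq εA εB α 1))
      (fun x y => by rw [hμ, hτ1, hΦ, hΦ, mul_one, one_mul]) w
  constructor
  · -- associativity implies the compatibility of τ with multiplications
    intro hA b b' a a'
    have G5 : μ (qq εA εB 1 b) (qq εA εB 1 b') = qq εA εB 1 (b * b') := by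
      rw [hμ, hτ2, hΦ, one_mul]
    have G6 : μ (qq εA εB a 1) (qq εA εB a' 1) = qq εA εB (a * a') 1 := by
      rw [hμ, hτ1, hΦ, one_mul]
    have S1 : ∀ t, Ψ b a' t = μ (qq εA εB 1 b) (μ t (qq εA εB a' 1)) := fun t => by
      have h := qq_ext (Ψ b a') ((μ (qq εA εB 1 b)).comp (μ.flip (qq εA εB a' 1)))
        (fun α β => by
          simp only [LinearMap.comp_apply, LinearMap.flip_apply]
          rw [hΨ, hμ, G1, ← hA, G4]) t
      simpa using h
    rw [S1, ← G4 b' a, ← G4 (b * b') (a * a'), ← G5, ← G6]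
    simp only [hA]
  · -- the compatibility of τ with multiplications implies associativity
    intro H
    have sub1 : ∀ (x : A) (δ : B) (u : TT εA εB),
        ∀ (a : A) (b'' : B),
        Φ (a * x) b'' (μ u (qq εA εB 1 δ)) = Φ a b'' (Φ x δ u) := by
      intro x δ u a b''
      have h := qq_ext ((Φ (a * x) b'').comp (μ.flip (qq εA εB 1 δ)))
        ((Φ a b'').comp (Φ x δ))
        (fun p r => by
          simp only [LinearMap.comp_apply, LinearMap.flip_apply]
          rw [hμ, hτ2, hΦ, hΦ, hΦ, hΦ]; simp [mul_assoc]) u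
      simpa using h
    have sub2a : ∀ (p : A) (δ : B) (v : TT εA εB), ∀ (a : A) (b'' : B),
        Φ a (δ * b'') (Φ p 1 v) = Φ a b'' (Φ p δ v) := by
      intro p δ v a b''
      have h := qq_ext ((Φ a (δ * b'')).comp (Φ p 1)) ((Φ a b'').comp (Φ p δ))
        (fun c d => by
          simp only [LinearMap.comp_apply]
          rw [hΦ, hΦ, hΦ, hΦ]; simp [mul_assoc]) v
      simpa using h
    have main : ∀ (a : A) (b : B) (a' : A) (b' : B) (a'' : A) (b'' : B),
        μ (μ (qq εA εB a b) (qq εA εB a' b')) (qq εA εB a'' b'') =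
        μ (qq εA εB a b) (μ (qq εA εB a' b') (qq εA εB a'' b'')) := by
      intro a b a' b' a'' b''
      have hL : μ (Φ a b' (τ (qq εB εA b a'))) (qq εA εB a'' b'') =
          Φ a b'' (μ (τ (qq εB εA b a')) (τ (qq εB εA b' a''))) := by
        have inner : ∀ (x : A) (y : B) (ss : TT εA εB),
            Φ (a * x) b'' (Ψ y 1 ss) = Φ a b'' (μ (qq εA εB x y) ss) := by
          intro x y ss
          have h := qq_ext ((Φ (a * x) b'').comp (Ψ y 1))
            ((Φ a b'').comp (μ (qq εA εB x y)))
            (fun γ δ => by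
              simp only [LinearMap.comp_apply]
              rw [hΨ, hτ2, hμ]
              exact sub1 x δ (τ (qq εB εA y γ)) a b'') ss
          simpa using h
        have h := qq_ext ((μ.flip (qq εA εB a'' b'')).comp (Φ a b'))
          ((Φ a b'').comp (μ.flip (τ (qq εB εA b' a''))))
          (fun x y => by
            simp only [LinearMap.comp_apply, LinearMap.flip_apply]
            rw [hΦ, hμ]
            have hH := H y b' a'' 1
            rw [mul_one] at hH
            rw [hH]
            exact inner x y (τ (qq εB εA b' a''))) (τ (qq εB εA b a'))
        simpa using h
      have hR : μ (qq εA εB a b) (Φ a' b'' (τ (qq εB εA b' a''))) =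
          Φ a b'' (μ (τ (qq εB εA b a')) (τ (qq εB εA b' a''))) := by
        have sub2 : ∀ (γ : A) (δ : B) (u : TT εA εB),
            Φ a (δ * b'') (μ u (qq εA εB γ 1)) = Φ a b'' (μ u (qq εA εB γ δ)) := by
          intro γ δ u
          have h := qq_ext ((Φ a (δ * b'')).comp (μ.flip (qq εA εB γ 1)))
            ((Φ a b'').comp (μ.flip (qq εA εB γ δ)))
            (fun p r => by
              simp only [LinearMap.comp_apply, LinearMap.flip_apply]
              rw [hμ, hμ]
              exact sub2a p δ (τ (qq εB εA r γ)) a b'') u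
          simpa using h
        have h := qq_ext ((μ (qq εA εB a b)).comp (Φ a' b''))
          ((Φ a b'').comp (μ (τ (qq εB εA b a'))))
          (fun γ δ => by
            simp only [LinearMap.comp_apply]
            rw [hΦ, hμ]
            have hH := H b 1 a' γ
            rw [mul_one, hτ1] at hH
            rw [hH, hΨ, hτ1]
            exact sub2 γ δ (τ (qq εB εA b a'))) (τ (qq εB εA b' a''))
        simpa using h
      rw [hμ a b a' b', hμ a' b' a'' b'', hL, hR]
    intro x y z
    refine tt_ind (P := fun x => μ (μ x y) z = μ x (μ y z)) ?_ (fun a b => ?_) ?_ x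
    · simp
    · refine tt_ind (P := fun y => μ (μ (qq εA εB a b) y) z = μ (qq εA εB a b) (μ y z)) ?_ (fun a' b' => ?_) ?_ y
      · simp
      · refine tt_ind (P := fun z => μ (μ (qq εA εB a b) (qq εA εB a' b')) z = μ (qq εA εB a b) (μ (qq εA εB a' b') z)) ?_ (fun a'' b'' => ?_) ?_ z
        · simp
        · exact main a b a' b' a'' b''
        · intro u v hu hv
          simp only [map_add, hu, hv]
      · intro u v hu hv
        simp only [map_add, LinearMap.add_apply, hu, hv]
    · intro u v hu hv
      simp only [map_add, LinearMap.add_apply, hu, hv]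
end

section
/- Let A and B be R-rings with R-augmentations π_A : A → R and π_B : B → R (i.e., π_A ∘ ε_A = id_R and π_B ∘ ε_B = id_R). Then the map v : B ⊗_R A → A ⊗_R B defined by v(b ⊗ a) = ε_A(π_B(b))·a ⊗ 1 + 1 ⊗ b·ε_B(π_A(a)) − ε_A(π_B(b)) ⊗ ε_B(π_A(a)) is a twisting map, i.e., it satisfies v(1 ⊗ a) = a ⊗ 1, v(b ⊗ 1) = 1 ⊗ b, and the associativity condition for twisted tensor products. -/
open TensorProduct

variable {k R A B : Type*} [Field k] [Ring R] [Ring A] [Ring B]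
  [Algebra k R] [Algebra k A] [Algebra k B]

/-- If `A` and `B` are `R`-rings with `R`-augmentations `π_A`, `π_B`, then the map
`v : B ⊗_R A → A ⊗_R B`, `v(b ⊗ a) = ε_A(π_B b)·a ⊗ 1 + 1 ⊗ b·ε_B(π_A a)
− ε_A(π_B b) ⊗ ε_B(π_A a)`, is a twisting map: it satisfies `v(1 ⊗ a) = a ⊗ 1`,
`v(b ⊗ 1) = 1 ⊗ b`, and the induced multiplication
`μ_v = (μ_A ⊗ μ_B) ∘ (1 ⊗ v ⊗ 1)` on `A ⊗_R B` is associative. -/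
theorem stmt_3 (εA : R →ₐ[k] A) (εB : R →ₐ[k] B)
    (πA : A →ₐ[k] R) (hπA : πA.comp εA = AlgHom.id k R)
    (πB : B →ₐ[k] R) (hπB : πB.comp εB = AlgHom.id k R)
    (v : TT εB εA →ₗ[k] TT εA εB)
    (hv : ∀ (b : B) (a : A),
      v (qq εB εA b a) = qq εA εB (εA (πB b) * a) 1 + qq εA εB 1 (b * εB (πA a))
        - qq εA εB (εA (πB b)) (εB (πA a)))
    (μ : TT εA εB →ₗ[k] TT εA εB →ₗ[k] TT εA εB)
    (Φ : A → B → TT εA εB →ₗ[k] TT εA εB)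
    (hΦ : ∀ (a : A) (b' : B) (x : A) (y : B),
      Φ a b' (qq εA εB x y) = qq εA εB (a * x) (y * b'))
    (hμ : ∀ (a : A) (b : B) (a' : A) (b' : B),
      μ (qq εA εB a b) (qq εA εB a' b') = Φ a b' (v (qq εB εA b a'))) :
    (∀ a : A, v (qq εB εA 1 a) = qq εA εB a 1) ∧
    (∀ b : B, v (qq εB εA b 1) = qq εA εB 1 b) ∧
    (∀ x y z : TT εA εB, μ (μ x y) z = μ x (μ y z)) := by
  have hA' : ∀ r, πA (εA r) = r := fun r => AlgHom.congr_fun hπA r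
  have hB' : ∀ r, πB (εB r) = r := fun r => AlgHom.congr_fun hπB r
  have hmul : ∀ (a : A) (b : B) (a' : A) (b' : B),
      μ (qq εA εB a b) (qq εA εB a' b') =
        qq εA εB (a * (εA (πB b) * a')) (1 * b')
          + qq εA εB (a * 1) (b * εB (πA a') * b')
          - qq εA εB (a * εA (πB b)) (εB (πA a') * b') := by
    intro a b a' b'
    rw [hμ, hv, map_sub, map_add, hΦ, hΦ, hΦ]
  have key : ∀ (a : A) (b : B) (a' : A) (b' : B) (a'' : A) (b'' : B),
      μ (μ (qq εA εB a b) (qq εA εB a' b')) (qq εA εB a'' b'') =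
        μ (qq εA εB a b) (μ (qq εA εB a' b') (qq εA εB a'' b'')) := by
    intro a b a' b' a'' b''
    simp only [hmul, map_add, map_sub, LinearMap.add_apply, LinearMap.sub_apply,
      map_mul, map_one, hA', hB', one_mul, mul_one, mul_assoc]
    abel
  refine ⟨?_, ?_, ?_⟩
  · intro a
    rw [hv]
    simp
  · intro b
    rw [hv]
    simp
  · -- extend associativity in the last variable
    have h1 : ∀ (a : A) (b : B) (a' : A) (b' : B) (z : TT εA εB),
        μ (μ (qq εA εB a b) (qq εA εB a' b')) z
          = μ (qq εA εB a b) (μ (qq εA εB a' b') z) := by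
      intro a b a' b' z
      obtain ⟨t, rfl⟩ := Submodule.Quotient.mk_surjective _ z
      induction t using TensorProduct.induction_on with
      | zero => simp [show (Submodule.Quotient.mk 0 : TT εA εB) = 0 from rfl]
      | tmul x y => exact key a b a' b' x y
      | add t1 t2 ih1 ih2 =>
        rw [show (Submodule.Quotient.mk (t1 + t2) : TT εA εB)
            = Submodule.Quotient.mk t1 + Submodule.Quotient.mk t2 from rfl]
        simp only [map_add, ih1, ih2]
    have h2 : ∀ (a : A) (b : B) (y z : TT εA εB),
        μ (μ (qq εA εB a b) y) z = μ (qq εA εB a b) (μ y z) := by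
      intro a b y z
      obtain ⟨t, rfl⟩ := Submodule.Quotient.mk_surjective _ y
      induction t using TensorProduct.induction_on with
      | zero => simp [show (Submodule.Quotient.mk 0 : TT εA εB) = 0 from rfl]
      | tmul x y' => exact h1 a b x y' z
      | add t1 t2 ih1 ih2 =>
        rw [show (Submodule.Quotient.mk (t1 + t2) : TT εA εB)
            = Submodule.Quotient.mk t1 + Submodule.Quotient.mk t2 from rfl]
        simp only [map_add, LinearMap.add_apply, ih1, ih2]
    intro x y z
    obtain ⟨t, rfl⟩ := Submodule.Quotient.mk_surjective _ x
    induction t using TensorProduct.induction_on with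
    | zero => simp [show (Submodule.Quotient.mk 0 : TT εA εB) = 0 from rfl]
    | tmul a b => exact h2 a b y z
    | add t1 t2 ih1 ih2 =>
      rw [show (Submodule.Quotient.mk (t1 + t2) : TT εA εB)
          = Submodule.Quotient.mk t1 + Submodule.Quotient.mk t2 from rfl]
      simp only [map_add, LinearMap.add_apply, ih1, ih2]
end

section
/- If A ⊗_R^τ B is a right fixed twisted tensor product with respect to an augmentation π_A : A → R with augmentation ideal I_A = ker π_A, then I_A ⊗_R B is a two-sided ideal of A ⊗_R^τ B (being the kernel of the ring morphism p_B), and consequently the twisting map τ sends B ⊗_R I_A into I_A ⊗_R B. -/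
open TensorProduct

variable {k R A B : Type*} [Field k] [Ring R] [Ring A] [Ring B]
  [Algebra k R] [Algebra k A] [Algebra k B]

private lemma exists_fin_rep {k A B : Type*} [CommRing k] [AddCommGroup A] [AddCommGroup B]
    [Module k A] [Module k B] (t : A ⊗[k] B) :
    ∃ (n : ℕ) (a : Fin n → A) (b : Fin n → B), t = ∑ i, a i ⊗ₜ[k] b i := by
  induction t with
  | zero => exact ⟨0, ![], ![], by simp⟩
  | tmul a b => exact ⟨1, ![a], ![b], by simp⟩
  | add x y hx hy =>
    obtain ⟨n, a, b, rfl⟩ := hx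
    obtain ⟨m, c, d, rfl⟩ := hy
    refine ⟨n + m, Fin.append a c, Fin.append b d, ?_⟩
    rw [Fin.sum_univ_add]
    simp [Fin.append_left, Fin.append_right]

/-- If `A ⊗_R^τ B` is a right fixed twisted tensor product with respect to an augmentation
`π_A : A → R` (that is, `B` is flat as a left `R`-module — expressed here by the equational
criterion of flatness — and the map `p_B : A ⊗_R^τ B → B` induced by `π_A` is a ring
morphism), then `I_A ⊗_R B`, where `I_A = ker π_A`, is a two-sided ideal of `A ⊗_R^τ B`,
namely the kernel of `p_B`; consequently `τ` sends `B ⊗_R I_A` into `I_A ⊗_R B`. -/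
theorem stmt_5 (εA : R →ₐ[k] A) (εB : R →ₐ[k] B)
    (πA : A →ₐ[k] R) (hπA : πA.comp εA = AlgHom.id k R)
    (τ : TT εB εA →ₗ[k] TT εA εB)
    (hτ1 : ∀ a : A, τ (qq εB εA 1 a) = qq εA εB a 1)
    (hτ2 : ∀ b : B, τ (qq εB εA b 1) = qq εA εB 1 b)
    (μ : TT εA εB →ₗ[k] TT εA εB →ₗ[k] TT εA εB)
    (Φ : A → B → TT εA εB →ₗ[k] TT εA εB)
    (hΦ : ∀ (a : A) (b' : B) (x : A) (y : B),
      Φ a b' (qq εA εB x y) = qq εA εB (a * x) (y * b'))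
    (hμ : ∀ (a : A) (b : B) (a' : A) (b' : B),
      μ (qq εA εB a b) (qq εA εB a' b') = Φ a b' (τ (qq εB εA b a')))
    (hassoc : ∀ x y z : TT εA εB, μ (μ x y) z = μ x (μ y z))
    -- `B` is flat as a left `R`-module (equational criterion of flatness):
    (hflat : ∀ (n : ℕ) (r : Fin n → R) (b : Fin n → B),
      (∑ i, εB (r i) * b i) = 0 →
      ∃ (p : ℕ) (a : Fin n → Fin p → R) (b' : Fin p → B),
        (∀ j, (∑ i, r i * a i j) = 0) ∧ ∀ i, b i = ∑ j, εB (a i j) * b' j)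
    (pB : TT εA εB →ₗ[k] B)
    (hpB : ∀ (a : A) (b : B), pB (qq εA εB a b) = εB (πA a) * b)
    -- `p_B` is a morphism of rings (the twisted tensor product is right fixed):
    (hpBmul : ∀ x y : TT εA εB, pB (μ x y) = pB x * pB y) :
    (∀ x ∈ Submodule.span k {z : TT εA εB | ∃ (a : A) (b : B), πA a = 0 ∧ z = qq εA εB a b},
      ∀ y : TT εA εB,
        μ x y ∈ Submodule.span k
          {z : TT εA εB | ∃ (a : A) (b : B), πA a = 0 ∧ z = qq εA εB a b} ∧
        μ y x ∈ Submodule.span k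
          {z : TT εA εB | ∃ (a : A) (b : B), πA a = 0 ∧ z = qq εA εB a b}) ∧
    Submodule.span k {z : TT εA εB | ∃ (a : A) (b : B), πA a = 0 ∧ z = qq εA εB a b}
      = LinearMap.ker pB ∧
    (∀ (b : B) (a : A), πA a = 0 →
      τ (qq εB εA b a) ∈
        Submodule.span k {z : TT εA εB | ∃ (a : A) (b : B), πA a = 0 ∧ z = qq εA εB a b}) := by
  
  -- Abbreviation for the generating set
  set S : Set (TT εA εB) := {z : TT εA εB | ∃ (a : A) (b : B), πA a = 0 ∧ z = qq εA εB a b}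
    with hS
  have hπ : ∀ r : R, πA (εA r) = r := fun r => by
    simpa using AlgHom.congr_fun hπA r
  -- the balancing relation in the quotient
  have hbal : ∀ (r : R) (a : A) (b : B),
      qq εA εB (a * εA r) b = qq εA εB a (εB r * b) := by
    intro r a b
    show Submodule.Quotient.mk _ = Submodule.Quotient.mk _
    rw [Submodule.Quotient.eq]
    exact Submodule.subset_span ⟨r, a, b, rfl⟩
  -- span ⊆ ker pB
  have hsub : Submodule.span k S ≤ LinearMap.ker pB := by
    rw [Submodule.span_le]
    rintro z ⟨a, b, ha, rfl⟩
    simp [LinearMap.mem_ker, hpB, ha]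
  -- ker pB ⊆ span
  have hker : LinearMap.ker pB ≤ Submodule.span k S := by
    intro x hx
    obtain ⟨t, rfl⟩ := Submodule.Quotient.mk_surjective _ x
    obtain ⟨n, a, b, rfl⟩ := exists_fin_rep t
    have hmk : (Submodule.Quotient.mk (∑ i, a i ⊗ₜ[k] b i) : TT εA εB)
        = ∑ i, qq εA εB (a i) (b i) := by
      simp only [qq, ← Submodule.mkQ_apply, map_sum]
    have hx' : (∑ i, εB (πA (a i)) * b i) = 0 := by
      have h0 : pB (Submodule.Quotient.mk (∑ i, a i ⊗ₜ[k] b i)) = 0 :=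
        LinearMap.mem_ker.mp hx
      rw [hmk, map_sum] at h0
      simpa only [hpB] using h0
    obtain ⟨p, c, b', hc, hb⟩ := hflat n (fun i => πA (a i)) b hx'
    have key : (Submodule.Quotient.mk (∑ i, a i ⊗ₜ[k] b i) : TT εA εB)
        = ∑ j, qq εA εB (∑ i, a i * εA (c i j)) (b' j) := by
      rw [hmk]
      calc ∑ i, qq εA εB (a i) (b i)
          = ∑ i, ∑ j, qq εA εB (a i * εA (c i j)) (b' j) := by
            refine Finset.sum_congr rfl fun i _ => ?_
            rw [hb i]
            rw [show (qq εA εB (a i) (∑ j, εB (c i j) * b' j))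
                = ∑ j, qq εA εB (a i) (εB (c i j) * b' j) from by
              simp only [qq, ← Submodule.mkQ_apply, tmul_sum, map_sum]]
            exact Finset.sum_congr rfl fun j _ => (hbal (c i j) (a i) (b' j)).symm
        _ = ∑ j, ∑ i, qq εA εB (a i * εA (c i j)) (b' j) := Finset.sum_comm
        _ = ∑ j, qq εA εB (∑ i, a i * εA (c i j)) (b' j) := by
            refine Finset.sum_congr rfl fun j _ => ?_
            simp only [qq, ← Submodule.mkQ_apply, sum_tmul, map_sum]
    rw [key]
    refine Submodule.sum_mem _ fun j _ => Submodule.subset_span ?_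
    refine ⟨∑ i, a i * εA (c i j), b' j, ?_, rfl⟩
    have : πA (∑ i, a i * εA (c i j)) = ∑ i, πA (a i) * c i j := by
      simp [map_sum, map_mul, hπ]
    rw [this, hc j]
  have hEq : Submodule.span k S = LinearMap.ker pB := le_antisymm hsub hker
  refine ⟨?_, hEq, ?_⟩
  · intro x hx y
    rw [hEq] at hx ⊢
    have hx0 : pB x = 0 := LinearMap.mem_ker.mp hx
    constructor
    · simp [LinearMap.mem_ker, hpBmul, hx0]
    · simp [LinearMap.mem_ker, hpBmul, hx0]
  · -- Φ 1 1 is the identity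
    have hid : ∀ z : TT εA εB, Φ 1 1 z = z := by
      intro z
      obtain ⟨t, rfl⟩ := Submodule.Quotient.mk_surjective _ z
      induction t with
      | zero =>
        rw [Submodule.Quotient.mk_zero, map_zero]
      | tmul a b =>
        simpa [qq] using hΦ 1 1 a b
      | add s t hs ht =>
        rw [Submodule.Quotient.mk_add, map_add, hs, ht]
    intro b a ha
    have h1 : τ (qq εB εA b a) = μ (qq εA εB 1 b) (qq εA εB a 1) := by
      rw [hμ]
      exact (hid _).symm
    rw [hEq, LinearMap.mem_ker, h1, hpBmul, hpB, hpB, ha]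
    simp
end

section
/- The matrix algebra M(n, k) of n×n matrices over a field k is isomorphic to a twisted tensor product (k[x]/xⁿ) ⊗_k^τ (k[y]/yⁿ) for some twisting map τ : (k[y]/yⁿ) ⊗_k (k[x]/xⁿ) → (k[x]/xⁿ) ⊗_k (k[y]/yⁿ). -/
open TensorProduct Polynomial

set_option maxHeartbeats 1000000

/-- The truncated polynomial algebra `k[x]/(xⁿ)`. -/
abbrev NilTrunc (k : Type*) [Field k] (n : ℕ) := AdjoinRoot (X ^ n : k[X])

namespace Stmt7Aux

open Matrix

variable (k : Type*) [Field k] (n : ℕ)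

/-- The nilpotent lower-shift matrix. -/
def Nmat : Matrix (Fin n) (Fin n) k :=
  Matrix.of fun a b => if (a : ℕ) = (b : ℕ) + 1 then 1 else 0

lemma Nmat_apply (a b : Fin n) :
    Nmat k n a b = if (a : ℕ) = (b : ℕ) + 1 then 1 else 0 := rfl

lemma Nmat_pow_apply (p : ℕ) (a b : Fin n) :
    (Nmat k n ^ p) a b = if (a : ℕ) = (b : ℕ) + p then 1 else 0 := by
  induction p generalizing a b with
  | zero =>
    simp [Matrix.one_apply, Fin.ext_iff, eq_comm]
  | succ p ih =>
    rw [pow_succ, Matrix.mul_apply]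
    simp only [ih, Nmat_apply, ite_mul, one_mul, zero_mul]
    by_cases h : (b : ℕ) + 1 < n
    · rw [Finset.sum_eq_single (⟨(b : ℕ) + 1, h⟩ : Fin n)]
      · simp only [Fin.val_mk, if_pos rfl]
        split_ifs <;> first | rfl | omega
      · intro c _ hc
        have hcb : (c : ℕ) ≠ (b : ℕ) + 1 := by simpa [Fin.ext_iff] using hc
        split_ifs <;> first | rfl | omega
      · intro hmem; exact absurd (Finset.mem_univ _) hmem
    · have ha : (a : ℕ) < n := a.isLt
      rw [Finset.sum_eq_zero, if_neg (by omega)]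
      intro c _
      have hc : (c : ℕ) < n := c.isLt
      split_ifs <;> first | rfl | omega

lemma NM_apply (i j : ℕ) (a c : Fin n) :
    (Nmat k n ^ i * (Nmat k n)ᵀ ^ j) a c =
      if i ≤ (a : ℕ) ∧ j ≤ (c : ℕ) ∧ (a : ℕ) - i = (c : ℕ) - j then 1 else 0 := by
  rw [Matrix.mul_apply]
  simp only [← Matrix.transpose_pow, Matrix.transpose_apply, Nmat_pow_apply, ite_mul, one_mul,
    zero_mul]
  by_cases h : i ≤ (a : ℕ) ∧ j ≤ (c : ℕ) ∧ (a : ℕ) - i = (c : ℕ) - j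
  · rw [if_pos h, Finset.sum_eq_single (⟨(a : ℕ) - i, by omega⟩ : Fin n)]
    · simp only [Fin.val_mk]
      split_ifs <;> first | rfl | omega
    · intro b _ hb
      have hba : (b : ℕ) ≠ (a : ℕ) - i := by simpa [Fin.ext_iff] using hb
      have hbn : (b : ℕ) < n := b.isLt
      split_ifs <;> first | rfl | omega
    · intro hmem; exact absurd (Finset.mem_univ _) hmem
  · rw [if_neg h, Finset.sum_eq_zero]
    intro b _
    have hb : (b : ℕ) < n := b.isLt
    split_ifs <;> first | rfl | omega

lemma std_eq (i j : Fin n) :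
    Matrix.single i j (1 : k) =
      Nmat k n ^ (i : ℕ) * (Nmat k n)ᵀ ^ (j : ℕ) -
        Nmat k n ^ ((i : ℕ) + 1) * (Nmat k n)ᵀ ^ ((j : ℕ) + 1) := by
  ext a c
  have ha : (a : ℕ) < n := a.isLt
  have hc : (c : ℕ) < n := c.isLt
  simp only [Matrix.sub_apply, NM_apply, Matrix.single, Matrix.of_apply, Fin.ext_iff]
  split_ifs <;> first | (exfalso; omega) | norm_num

lemma Nmat_pow_n : Nmat k n ^ n = 0 := by
  ext a b
  have ha : (a : ℕ) < n := a.isLt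
  rw [Nmat_pow_apply, Matrix.zero_apply, if_neg (by omega)]



noncomputable def rho : NilTrunc k n →ₐ[k] Matrix (Fin n) (Fin n) k :=
  Ideal.Quotient.liftₐ (Ideal.span {(X ^ n : k[X])}) (Polynomial.aeval (Nmat k n))
    (by
      intro a ha
      obtain ⟨g, rfl⟩ := Ideal.mem_span_singleton'.mp ha
      rw [_root_.map_mul, _root_.map_pow, Polynomial.aeval_X, Nmat_pow_n, mul_zero])

noncomputable def sig : NilTrunc k n →ₐ[k] Matrix (Fin n) (Fin n) k :=
  Ideal.Quotient.liftₐ (Ideal.span {(X ^ n : k[X])}) (Polynomial.aeval ((Nmat k n)ᵀ))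
    (by
      intro a ha
      obtain ⟨g, rfl⟩ := Ideal.mem_span_singleton'.mp ha
      rw [_root_.map_mul, _root_.map_pow, Polynomial.aeval_X, ← Matrix.transpose_pow, Nmat_pow_n,
        Matrix.transpose_zero, mul_zero])

lemma rho_mk (p : k[X]) : rho k n (AdjoinRoot.mk _ p) = Polynomial.aeval (Nmat k n) p := rfl

lemma sig_mk (p : k[X]) : sig k n (AdjoinRoot.mk _ p) = Polynomial.aeval ((Nmat k n)ᵀ) p := rfl

lemma rho_root : rho k n (AdjoinRoot.root _) = Nmat k n := by
  rw [AdjoinRoot.root, rho_mk, Polynomial.aeval_X]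

lemma sig_root : sig k n (AdjoinRoot.root _) = (Nmat k n)ᵀ := by
  rw [AdjoinRoot.root, sig_mk, Polynomial.aeval_X]

noncomputable def phi : NilTrunc k n ⊗[k] NilTrunc k n →ₗ[k] Matrix (Fin n) (Fin n) k :=
  TensorProduct.lift ((LinearMap.mul k (Matrix (Fin n) (Fin n) k)).compl₁₂
    (rho k n).toLinearMap (sig k n).toLinearMap)

lemma phi_tmul (a b : NilTrunc k n) : phi k n (a ⊗ₜ[k] b) = rho k n a * sig k n b := rfl

lemma phi_pow (p q : ℕ) :
    phi k n (((AdjoinRoot.root _ : NilTrunc k n) ^ p) ⊗ₜ[k] ((AdjoinRoot.root _ : NilTrunc k n) ^ q))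
      = Nmat k n ^ p * (Nmat k n)ᵀ ^ q := by
  rw [phi_tmul, _root_.map_pow, _root_.map_pow, rho_root, sig_root]

lemma phi_surj : Function.Surjective (phi k n) := by
  intro m
  suffices h : ∀ i j : Fin n, Matrix.single i j (1 : k) ∈ LinearMap.range (phi k n) by
    have hm : m ∈ LinearMap.range (phi k n) := by
      rw [Matrix.matrix_eq_sum_single m]
      refine Submodule.sum_mem _ fun i _ => Submodule.sum_mem _ fun j _ => ?_
      have h2 : Matrix.single i j (m i j) = (m i j) • Matrix.single i j (1 : k) := by
        rw [Matrix.smul_single, smul_eq_mul, mul_one]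
      rw [h2]
      exact Submodule.smul_mem _ _ (h i j)
    exact hm
  intro i j
  refine ⟨(((AdjoinRoot.root _ : NilTrunc k n) ^ (i : ℕ)) ⊗ₜ[k]
      ((AdjoinRoot.root _ : NilTrunc k n) ^ (j : ℕ))) -
    (((AdjoinRoot.root _ : NilTrunc k n) ^ ((i : ℕ) + 1)) ⊗ₜ[k]
      ((AdjoinRoot.root _ : NilTrunc k n) ^ ((j : ℕ) + 1))), ?_⟩
  rw [map_sub, phi_pow, phi_pow, ← std_eq]

end Stmt7Aux

/-- The matrix algebra `M(n, k)` is isomorphic to a twisted tensor product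
`(k[x]/xⁿ) ⊗ₖ^τ (k[y]/yⁿ)` for a suitable twisting map `τ`: there exist a `k`-linear
map `τ : B ⊗ₖ A → A ⊗ₖ B` satisfying the unit conditions, whose induced multiplication
`μ = (μ_A ⊗ μ_B) ∘ (1 ⊗ τ ⊗ 1)` is associative, and a `k`-linear bijection
`e : M(n,k) → A ⊗ₖ B` with `e 1 = 1 ⊗ 1` carrying matrix multiplication to `μ`. -/
theorem stmt_7 (k : Type*) [Field k] (n : ℕ) :
    ∃ τ : NilTrunc k n ⊗[k] NilTrunc k n →ₗ[k] NilTrunc k n ⊗[k] NilTrunc k n,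
      (∀ x : NilTrunc k n, τ (1 ⊗ₜ[k] x) = x ⊗ₜ[k] 1) ∧
      (∀ y : NilTrunc k n, τ (y ⊗ₜ[k] 1) = 1 ⊗ₜ[k] y) ∧
      ∃ μ : NilTrunc k n ⊗[k] NilTrunc k n →ₗ[k]
            NilTrunc k n ⊗[k] NilTrunc k n →ₗ[k] NilTrunc k n ⊗[k] NilTrunc k n,
        (∀ x x' y y' : NilTrunc k n,
          μ (x ⊗ₜ[k] y) (x' ⊗ₜ[k] y') =
            TensorProduct.map (LinearMap.mulLeft k x) (LinearMap.mulRight k y')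
              (τ (y ⊗ₜ[k] x'))) ∧
        (∀ u w z, μ (μ u w) z = μ u (μ w z)) ∧
        ∃ e : Matrix (Fin n) (Fin n) k ≃ₗ[k] NilTrunc k n ⊗[k] NilTrunc k n,
          e 1 = 1 ⊗ₜ[k] 1 ∧
          ∀ M N : Matrix (Fin n) (Fin n) k, e (M * N) = μ (e M) (e N) := by
  classical
  have hmonic : (X ^ n : k[X]).Monic := Polynomial.monic_X_pow n
  haveI : Module.Finite k (NilTrunc k n) :=
    Module.Finite.of_basis (AdjoinRoot.powerBasis' hmonic).basis
  have hfr : Module.finrank k (NilTrunc k n) = n := by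
    rw [Module.finrank_eq_card_basis (AdjoinRoot.powerBasis' hmonic).basis, Fintype.card_fin,
      AdjoinRoot.powerBasis'_dim, Polynomial.natDegree_X_pow]
  have hdim : Module.finrank k (NilTrunc k n ⊗[k] NilTrunc k n)
      = Module.finrank k (Matrix (Fin n) (Fin n) k) := by
    rw [Module.finrank_tensorProduct, hfr, Module.finrank_matrix, Module.finrank_self,
      Fintype.card_fin, mul_one]
  have hbij : Function.Bijective (Stmt7Aux.phi k n) :=
    ⟨(LinearMap.injective_iff_surjective_of_finrank_eq_finrank hdim).mpr (Stmt7Aux.phi_surj k n),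
      Stmt7Aux.phi_surj k n⟩
  set Φ : NilTrunc k n ⊗[k] NilTrunc k n ≃ₗ[k] Matrix (Fin n) (Fin n) k :=
    LinearEquiv.ofBijective (Stmt7Aux.phi k n) hbij with hΦ
  have hΦapp : ∀ v, Φ v = Stmt7Aux.phi k n v := fun v => rfl
  have key : ∀ (x y' : NilTrunc k n) (v : NilTrunc k n ⊗[k] NilTrunc k n),
      Stmt7Aux.phi k n (TensorProduct.map (LinearMap.mulLeft k x) (LinearMap.mulRight k y') v)
        = Stmt7Aux.rho k n x * Stmt7Aux.phi k n v * Stmt7Aux.sig k n y' := by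
    intro x y' v
    induction v using TensorProduct.induction_on with
    | zero => simp
    | tmul a b =>
      rw [TensorProduct.map_tmul, Stmt7Aux.phi_tmul, Stmt7Aux.phi_tmul,
        LinearMap.mulLeft_apply, LinearMap.mulRight_apply, _root_.map_mul, _root_.map_mul]
      simp only [mul_assoc]
    | add u w hu hw => simp only [map_add, hu, hw, mul_add, add_mul]
  refine ⟨Φ.symm.toLinearMap ∘ₗ TensorProduct.lift
      ((LinearMap.mul k (Matrix (Fin n) (Fin n) k)).compl₁₂
        (Stmt7Aux.sig k n).toLinearMap (Stmt7Aux.rho k n).toLinearMap), ?_, ?_, ?_⟩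
  · intro x
    have h1 : Stmt7Aux.sig k n 1 * Stmt7Aux.rho k n x = Φ (x ⊗ₜ[k] 1) := by
      rw [hΦapp, Stmt7Aux.phi_tmul, _root_.map_one, one_mul, mul_one]
    simp only [LinearMap.comp_apply, TensorProduct.lift.tmul, LinearMap.compl₁₂_apply,
      AlgHom.toLinearMap_apply, LinearMap.mul_apply']
    rw [h1]
    exact Φ.symm_apply_apply _
  · intro y
    have h1 : Stmt7Aux.sig k n y * Stmt7Aux.rho k n 1 = Φ (1 ⊗ₜ[k] y) := by
      rw [hΦapp, Stmt7Aux.phi_tmul, _root_.map_one, one_mul, mul_one]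
    simp only [LinearMap.comp_apply, TensorProduct.lift.tmul, LinearMap.compl₁₂_apply,
      AlgHom.toLinearMap_apply, LinearMap.mul_apply']
    rw [h1]
    exact Φ.symm_apply_apply _
  · refine ⟨((LinearMap.mul k (Matrix (Fin n) (Fin n) k)).compl₁₂
        Φ.toLinearMap Φ.toLinearMap).compr₂ Φ.symm.toLinearMap, ?_, ?_, ?_⟩
    · intro x x' y y'
      simp only [LinearMap.compr₂_apply, LinearMap.compl₁₂_apply, LinearMap.mul_apply',
        LinearEquiv.coe_coe, LinearMap.comp_apply, TensorProduct.lift.tmul,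
        AlgHom.toLinearMap_apply]
      set m : Matrix (Fin n) (Fin n) k := Stmt7Aux.sig k n y * Stmt7Aux.rho k n x' with hm
      have h2 : Φ (TensorProduct.map (LinearMap.mulLeft k x) (LinearMap.mulRight k y')
          (Φ.symm m)) = Stmt7Aux.rho k n x * m * Stmt7Aux.sig k n y' := by
        rw [hΦapp, key]
        congr 1
        · congr 1
          rw [← hΦapp, LinearEquiv.apply_symm_apply]
      have h3 : TensorProduct.map (LinearMap.mulLeft k x) (LinearMap.mulRight k y')
          (Φ.symm m) = Φ.symm (Stmt7Aux.rho k n x * m * Stmt7Aux.sig k n y') := by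
        rw [← h2, LinearEquiv.symm_apply_apply]
      rw [h3]
      congr 1
      rw [hΦapp, hΦapp, Stmt7Aux.phi_tmul, Stmt7Aux.phi_tmul, hm]
      rw [mul_assoc, mul_assoc, mul_assoc]
    · intro u w z
      simp only [LinearMap.compr₂_apply, LinearMap.compl₁₂_apply, LinearMap.mul_apply',
        LinearEquiv.coe_coe, LinearEquiv.apply_symm_apply, mul_assoc]
    · refine ⟨Φ.symm, ?_, ?_⟩
      · have h1 : Φ ((1 : NilTrunc k n) ⊗ₜ[k] (1 : NilTrunc k n)) = 1 := by
          rw [hΦapp, Stmt7Aux.phi_tmul, _root_.map_one, _root_.map_one, mul_one]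
        rw [← h1]
        exact Φ.symm_apply_apply _
      · intro M N
        simp only [LinearMap.compr₂_apply, LinearMap.compl₁₂_apply, LinearMap.mul_apply',
          LinearEquiv.coe_coe, LinearEquiv.apply_symm_apply]
end

section
/- Let K_n be the path algebra of the Kronecker quiver with two vertices 1, 2 and n arrows from vertex 1 to vertex 2, and let S = k × k be its semisimple subalgebra spanned by the vertex idempotents. Then K_n ≅ K_1 ⊗_S^v K_{n−1}, where v is the twisting map v(b ⊗ a) = ε(π'(b))·a ⊗ 1 + 1 ⊗ b·ε'(π(a)) − ε(π'(b)) ⊗ ε'(π(a)) built from the natural augmentations K_1 → S and K_{n−1} → S killing the arrows. -/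
/-!
`K_N` has the basis `e₁, e₂, c₁, …, c_N`: it spans because products of these elements are again
among them or zero, and it is linearly independent, as the left regular representation shows.
The multiplication map `a ⊗ b ↦ a * b`, which embeds `K_p` and `K_q` into `K_(p+q)` through the
first `p` and the last `q` arrows, is balanced over `S` and sends the spanning family
`e₁ ⊗ e₁, e₂ ⊗ e₂, cᵢ ⊗ e₁, e₂ ⊗ cⱼ` of `K_p ⊗_S K_q` onto that basis of `K_(p+q)`, so it is a
linear isomorphism. It carries `μ_v` to the product because every element differs from its
image under `ε ∘ π` by a combination of arrows, and a product of two arrows vanishes; this is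
exactly the relation `b * a = ε(π' b) * a + b * ε(π a) - ε(π' b) * ε(π a)` in `K_(p+q)`.
-/

/-- Generators of the path algebra of the two-vertex quiver `Q_{n,m}`:
vertex idempotents `e1, e2`, arrows `c i : 1 → 2` and `b j : 2 → 1`. -/
inductive QGen (n m : ℕ) : Type
  | e1 | e2 | c (i : Fin n) | b (j : Fin m)

section

variable (k : Type) [Field k] (n m : ℕ)

/-- The generator `e₁` in the free algebra. -/
noncomputable def gE1 : FreeAlgebra k (QGen n m) := FreeAlgebra.ι k QGen.e1

/-- The generator `e₂` in the free algebra. -/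
noncomputable def gE2 : FreeAlgebra k (QGen n m) := FreeAlgebra.ι k QGen.e2

/-- The generator `c i` in the free algebra. -/
noncomputable def gC (i : Fin n) : FreeAlgebra k (QGen n m) := FreeAlgebra.ι k (QGen.c i)

/-- The generator `b j` in the free algebra. -/
noncomputable def gB (j : Fin m) : FreeAlgebra k (QGen n m) := FreeAlgebra.ι k (QGen.b j)

/-- The linear combination `∑ u i • c i` of the arrows `c i`, i.e. the identification of
the coefficient space `k^n` with the span `C` of the arrows `c₁, …, c_n`. -/
noncomputable def glc : (Fin n → k) →ₗ[k] FreeAlgebra k (QGen n m) :=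
  ∑ i : Fin n, (LinearMap.toSpanSingleton k _ (gC k n m i)).comp (LinearMap.proj i)

/-- The relations defining `R_F = kQ_{n,m}/I_F`: the path-algebra relations of the
quiver `Q_{n,m}` together with the relations `b c b' = 0`, `w · b j = 0` for `w ∈ W j`,
and `b j · v = 0` for `v ∈ V j` attached to the family
`F = {V₁, …, V_m; W₁, …, W_m}` of subspaces of `C = k^n`. -/
inductive relF (V W : Fin m → Submodule k (Fin n → k)) :
    FreeAlgebra k (QGen n m) → FreeAlgebra k (QGen n m) → Prop
  | idem1 : relF V W (gE1 k n m * gE1 k n m) (gE1 k n m)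
  | idem2 : relF V W (gE2 k n m * gE2 k n m) (gE2 k n m)
  | orth12 : relF V W (gE1 k n m * gE2 k n m) 0
  | orth21 : relF V W (gE2 k n m * gE1 k n m) 0
  | unit : relF V W (gE1 k n m + gE2 k n m) 1
  | cLeft (i : Fin n) : relF V W (gE2 k n m * gC k n m i) (gC k n m i)
  | cRight (i : Fin n) : relF V W (gC k n m i * gE1 k n m) (gC k n m i)
  | bLeft (j : Fin m) : relF V W (gE1 k n m * gB k n m j) (gB k n m j)
  | bRight (j : Fin m) : relF V W (gB k n m j * gE2 k n m) (gB k n m j)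
  | bcb (i : Fin n) (j j' : Fin m) :
      relF V W (gB k n m j * gC k n m i * gB k n m j') 0
  | wb (j : Fin m) (w : Fin n → k) (hw : w ∈ W j) :
      relF V W (glc k n m w * gB k n m j) 0
  | bv (j : Fin m) (v : Fin n → k) (hv : v ∈ V j) :
      relF V W (gB k n m j * glc k n m v) 0

/-- The algebra `R_F = kQ_{n,m}/I_F`. -/
abbrev RF (V W : Fin m → Submodule k (Fin n → k)) := RingQuot (relF k n m V W)

variable (V W : Fin m → Submodule k (Fin n → k))

/-- The projection from the free algebra onto `R_F`. -/
noncomputable def prF : FreeAlgebra k (QGen n m) →ₐ[k] RF k n m V W :=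
  RingQuot.mkAlgHom k _

/-- The idempotent `e₁` of `R_F`. -/
noncomputable def qE1 : RF k n m V W := prF k n m V W (gE1 k n m)

/-- The idempotent `e₂` of `R_F`. -/
noncomputable def qE2 : RF k n m V W := prF k n m V W (gE2 k n m)

/-- The arrow `c i` of `R_F`. -/
noncomputable def qC (i : Fin n) : RF k n m V W := prF k n m V W (gC k n m i)

/-- The arrow `b j` of `R_F`. -/
noncomputable def qB (j : Fin m) : RF k n m V W := prF k n m V W (gB k n m j)

/-- The identification of `k^n` with the span `C ⊆ R_F` of the arrows `c i`. -/
noncomputable def qlc : (Fin n → k) →ₗ[k] RF k n m V W :=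
  (prF k n m V W).toLinearMap.comp (glc k n m)

/-- Left multiplication by `x` as an endomorphism of `R_F` viewed as a right module
over itself; its range is the right ideal `x·R_F` and its kernel is the right
annihilator `rAnn(x)`. -/
noncomputable def rmul (x : RF k n m V W) :
    RF k n m V W →ₗ[(RF k n m V W)ᵐᵒᵖ] RF k n m V W where
  toFun y := x * y
  map_add' := mul_add x
  map_smul' r y := by
    simp only [RingHom.id_apply, MulOpposite.smul_eq_mul_unop]
    rw [mul_assoc]

end

open TensorProduct

/-- The empty family of subspaces (no `b`-arrows, no relations). -/
def emptyFam (k : Type) [Field k] (n : ℕ) : Fin 0 → Submodule k (Fin n → k) :=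
  fun i => i.elim0

/-- The Kronecker algebra `K_n`: the path algebra of the quiver with two vertices and
`n` arrows `c₁, …, c_n` from vertex 1 to vertex 2 (the case `m = 0` of `R_F`, with no
relations beyond the path-algebra ones). -/
abbrev Kron (k : Type) [Field k] (n : ℕ) := RF k n 0 (emptyFam k n) (emptyFam k n)

/-- The structure map `ε : S = k × k → K_n`, `(s₁, s₂) ↦ s₁ e₁ + s₂ e₂`, of the
semisimple subalgebra spanned by the vertex idempotents. -/
noncomputable def epsS (k : Type) [Field k] (n : ℕ) (s : k × k) : Kron k n :=
  s.1 • qE1 k n 0 (emptyFam k n) (emptyFam k n) + s.2 • qE2 k n 0 (emptyFam k n) (emptyFam k n)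

/-- The submodule of balancing relations defining the tensor product
`K₁ ⊗_S K_{n-1}` over `S = k × k` inside `K₁ ⊗ₖ K_{n-1}`. -/
noncomputable def balK (k : Type) [Field k] (n : ℕ) :
    Submodule k (Kron k 1 ⊗[k] Kron k (n - 1)) :=
  Submodule.span k
    {z | ∃ (s : k × k) (a : Kron k 1) (b : Kron k (n - 1)),
      z = (a * epsS k 1 s) ⊗ₜ[k] b - a ⊗ₜ[k] (epsS k (n - 1) s * b)}

/-- The `S`-bimodule `K₁ ⊗_S K_{n-1}`, underlying the twisted tensor product
`K₁ ⊗_S^v K_{n-1}`. -/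
abbrev TKron (k : Type) [Field k] (n : ℕ) :=
  @HasQuotient.Quotient _ _ (@Submodule.hasQuotient k _ _ TensorProduct.addCommGroup _) (balK k n)

/-- The class of the pure tensor `a ⊗ b` in `K₁ ⊗_S K_{n-1}`. -/
noncomputable def qK (k : Type) [Field k] (n : ℕ) (a : Kron k 1) (b : Kron k (n - 1)) :
    TKron k n :=
  Submodule.Quotient.mk (a ⊗ₜ[k] b)

namespace Kron

variable (k : Type) [Field k] (N : ℕ)

/-- Makes all additive structures on `Kron k N` come from a single `Ring` instance; otherwise
unifying the module instances on the quotient `KronTensor` below times out. -/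
noncomputable scoped instance instRing : Ring (Kron k N) := RingQuot.instRing _

noncomputable def e1 : Kron k N := qE1 k N 0 (emptyFam k N) (emptyFam k N)

noncomputable def e2 : Kron k N := qE2 k N 0 (emptyFam k N) (emptyFam k N)

noncomputable def c (i : Fin N) : Kron k N := qC k N 0 (emptyFam k N) (emptyFam k N) i

variable {k N}

theorem e1_mul_e1 : e1 k N * e1 k N = e1 k N := by
  rw [e1, qE1, ← map_mul]; exact RingQuot.mkAlgHom_rel k relF.idem1

theorem e1_mul_e2 : e1 k N * e2 k N = 0 := by
  rw [e1, e2, qE1, qE2, ← map_mul, ← map_zero (prF k N 0 _ _)]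
  exact RingQuot.mkAlgHom_rel k relF.orth12

theorem e1_add_e2 : e1 k N + e2 k N = 1 := by
  rw [e1, e2, qE1, qE2, ← map_add, ← map_one (prF k N 0 _ _)]
  exact RingQuot.mkAlgHom_rel k relF.unit

theorem e2_mul_c (i : Fin N) : e2 k N * c k N i = c k N i := by
  rw [e2, c, qE2, qC, ← map_mul]; exact RingQuot.mkAlgHom_rel k (relF.cLeft i)

theorem c_mul_e1 (i : Fin N) : c k N i * e1 k N = c k N i := by
  rw [e1, c, qE1, qC, ← map_mul]; exact RingQuot.mkAlgHom_rel k (relF.cRight i)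

theorem e2_eq_one_sub_e1 : e2 k N = 1 - e1 k N := by
  rw [← e1_add_e2, add_sub_cancel_left]

theorem isIdempotentElem_e1 : IsIdempotentElem (e1 k N) := e1_mul_e1

theorem isIdempotentElem_e2 : IsIdempotentElem (e2 k N) := by
  rw [e2_eq_one_sub_e1]; exact isIdempotentElem_e1.one_sub

theorem e2_mul_e1 : e2 k N * e1 k N = 0 := by
  rw [e2_eq_one_sub_e1]; exact isIdempotentElem_e1.one_sub_mul_self

theorem e1_mul_c (i : Fin N) : e1 k N * c k N i = 0 := by
  rw [← e2_mul_c, ← mul_assoc, e1_mul_e2, zero_mul]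

theorem c_mul_e2 (i : Fin N) : c k N i * e2 k N = 0 := by
  rw [← c_mul_e1, mul_assoc, e1_mul_e2, mul_zero]

theorem c_mul_c (i j : Fin N) : c k N i * c k N j = 0 := by
  rw [← c_mul_e1, mul_assoc, e1_mul_c, mul_zero]

theorem epsS_eq (s : k × k) : epsS k N s = s.1 • e1 k N + s.2 • e2 k N := rfl

theorem epsS_one_zero : epsS k N (1, 0) = e1 k N := by
  simp [epsS_eq]

theorem epsS_zero_one : epsS k N (0, 1) = e2 k N := by
  simp [epsS_eq]

noncomputable def lift {A : Type*} [Ring A] [Algebra k A] (e : A) (he : IsIdempotentElem e)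
    (y : Fin N → A) (hey : ∀ i, e * y i = 0) (hye : ∀ i, y i * e = y i) : Kron k N →ₐ[k] A :=
  RingQuot.liftAlgHom k ⟨FreeAlgebra.lift k fun
    | .e1 => e
    | .e2 => 1 - e
    | .c i => y i
    | .b j => j.elim0, by
    intro x x' h
    cases h with
    | idem1 => simpa [gE1] using he.eq
    | idem2 => simpa [gE2] using he.one_sub.eq
    | orth12 => simpa [gE1, gE2] using he.mul_one_sub_self
    | orth21 => simpa [gE1, gE2] using he.one_sub_mul_self
    | unit => simp [gE1, gE2]
    | cLeft i => simp [gE2, gC, sub_mul, hey]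
    | cRight i => simpa [gE1, gC] using hye i
    | bLeft j | bRight j | bcb _ j | wb j | bv j => exact j.elim0⟩

section lift

variable {A : Type*} [Ring A] [Algebra k A] (e : A) (he : IsIdempotentElem e)
  (y : Fin N → A) (hey : ∀ i, e * y i = 0) (hye : ∀ i, y i * e = y i)

theorem lift_e1 : lift e he y hey hye (e1 k N) = e := by
  rw [lift, e1, qE1, prF, RingQuot.liftAlgHom_mkAlgHom_apply, gE1, FreeAlgebra.lift_ι_apply]

theorem lift_e2 : lift e he y hey hye (e2 k N) = 1 - e := by
  rw [lift, e2, qE2, prF, RingQuot.liftAlgHom_mkAlgHom_apply, gE2, FreeAlgebra.lift_ι_apply]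

theorem lift_c (i : Fin N) : lift e he y hey hye (c k N i) = y i := by
  rw [lift, c, qC, prF, RingQuot.liftAlgHom_mkAlgHom_apply, gC, FreeAlgebra.lift_ι_apply]

end lift

noncomputable def map {M : ℕ} (f : Fin N → Fin M) : Kron k N →ₐ[k] Kron k M :=
  lift (e1 k M) isIdempotentElem_e1 (c k M ∘ f) (fun _ => e1_mul_c _) (fun _ => c_mul_e1 _)

section map

variable {M : ℕ} (f : Fin N → Fin M)

@[simp] theorem map_e1 : map f (e1 k N) = e1 k M := lift_e1 ..

@[simp] theorem map_e2 : map f (e2 k N) = e2 k M := by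
  rw [map, lift_e2, e2_eq_one_sub_e1]

@[simp] theorem map_c (i : Fin N) : map f (c k N i) = c k M (f i) := lift_c ..

theorem map_epsS (s : k × k) : map f (epsS k N s) = epsS k M s := by
  simp [epsS_eq]

end map

/-- The left regular representation of `K_N`, written in the basis `e₁, e₂, c i`. -/
noncomputable def toMatrix : Kron k N →ₐ[k] Matrix (Fin 2 ⊕ Fin N) (Fin 2 ⊕ Fin N) k :=
  lift (Matrix.single (.inl 0) (.inl 0) 1) (by simp [IsIdempotentElem])
    (fun i => Matrix.single (.inr i) (.inl 0) 1) (fun _ => by simp) (fun _ => by simp)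

theorem toMatrix_e1 : toMatrix (e1 k N) = Matrix.single (.inl 0) (.inl 0) 1 := lift_e1 ..

theorem toMatrix_e2 : toMatrix (e2 k N) = 1 - Matrix.single (.inl 0) (.inl 0) 1 := lift_e2 ..

theorem toMatrix_c (i : Fin N) : toMatrix (c k N i) = Matrix.single (.inr i) (.inl 0) 1 :=
  lift_c ..

variable (k N) in
noncomputable def basisFam : Fin 2 ⊕ Fin N → Kron k N
  | .inl 0 => e1 k N
  | .inl 1 => e2 k N
  | .inr i => c k N i

theorem linearIndependent_basisFam : LinearIndependent k (basisFam k N) := by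
  -- `x = a • e₁ + b • e₂ + ∑ yᵢ • cᵢ` has `a`, `b`, `yᵢ` at the entries `(e₁, e₁)`, `(e₂, e₂)`,
  -- `(cᵢ, e₁)` of its matrix.
  let col : Fin 2 ⊕ Fin N → Fin 2 ⊕ Fin N := fun j => if j = .inl 1 then .inl 1 else .inl 0
  let coord : Kron k N →ₗ[k] Fin 2 ⊕ Fin N → k :=
    LinearMap.pi fun j => Matrix.entryLinearMap k k j (col j) ∘ₗ toMatrix.toLinearMap
  refine LinearIndependent.of_comp coord ?_
  convert (Pi.basisFun k (Fin 2 ⊕ Fin N)).linearIndependent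
  ext j' j
  rcases j with j | j <;> rcases j' with j' | j' <;> (try fin_cases j) <;> (try fin_cases j') <;>
    simp [coord, col, basisFam, toMatrix_e1, toMatrix_e2, toMatrix_c, Matrix.single_apply,
      Pi.single_apply, eq_comm]

theorem basisFam_mul_basisFam_mem (i j : Fin 2 ⊕ Fin N) :
    basisFam k N i * basisFam k N j ∈ Submodule.span k (Set.range (basisFam k N)) := by
  have mem (j) : basisFam k N j ∈ Submodule.span k (Set.range (basisFam k N)) :=
    Submodule.subset_span ⟨j, rfl⟩
  rcases i with i | i <;> rcases j with j | j <;> (try fin_cases i) <;> (try fin_cases j) <;>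
    simp only [basisFam, e1_mul_e1, e1_mul_e2, e2_mul_e1,
      isIdempotentElem_e2.eq, e1_mul_c, e2_mul_c, c_mul_e1, c_mul_e2, c_mul_c]
  all_goals first | exact zero_mem _ | exact mem (.inl 0) | exact mem (.inl 1) | exact mem (.inr _)

theorem span_range_basisFam : Submodule.span k (Set.range (basisFam k N)) = ⊤ := by
  set S := Submodule.span k (Set.range (basisFam k N))
  have mem (j) : basisFam k N j ∈ S := Submodule.subset_span ⟨j, rfl⟩
  have mul_le : S * S ≤ S := by
    rw [Submodule.span_mul_span, Submodule.span_le]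
    rintro _ ⟨_, ⟨i, rfl⟩, _, ⟨j, rfl⟩, rfl⟩
    exact basisFam_mul_basisFam_mem i j
  have one_mem : (1 : Kron k N) ∈ S := by
    rw [← e1_add_e2]; exact add_mem (mem (.inl 0)) (mem (.inl 1))
  refine Submodule.eq_top_iff'.mpr fun x => ?_
  obtain ⟨x, rfl⟩ := RingQuot.mkAlgHom_surjective k _ x
  induction x using FreeAlgebra.induction with
  | grade0 r =>
    rw [AlgHom.commutes, Algebra.algebraMap_eq_smul_one]
    exact S.smul_mem r one_mem
  | grade1 g =>
    cases g with
    | e1 => exact mem (.inl 0)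
    | e2 => exact mem (.inl 1)
    | c i => exact mem (.inr i)
    | b j => exact j.elim0
  | mul x y hx hy => rw [map_mul]; exact mul_le (Submodule.mul_mem_mul hx hy)
  | add x y hx hy => rw [map_add]; exact add_mem hx hy

variable (k N) in
noncomputable def basis : Module.Basis (Fin 2 ⊕ Fin N) k (Kron k N) :=
  .mk linearIndependent_basisFam span_range_basisFam.ge

theorem coe_basis : ⇑(basis k N) = basisFam k N := Module.Basis.coe_mk ..

variable (k N) in
noncomputable def arrows : Submodule k (Kron k N) := Submodule.span k (Set.range (c k N))

theorem c_mem_arrows (i : Fin N) : c k N i ∈ arrows k N :=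
  Submodule.subset_span (Set.mem_range_self i)

theorem mul_eq_zero_of_mem_arrows {x y : Kron k N} (hx : x ∈ arrows k N) (hy : y ∈ arrows k N) :
    x * y = 0 := by
  have h : arrows k N * arrows k N = ⊥ := by
    rw [arrows, Submodule.span_mul_span, Submodule.span_eq_bot]
    rintro _ ⟨_, ⟨i, rfl⟩, _, ⟨j, rfl⟩, rfl⟩
    exact c_mul_c i j
  simpa [h] using Submodule.mul_mem_mul hx hy

theorem sub_epsS_mem_arrows (π : Kron k N →ₗ[k] k × k) (h₁ : π (e1 k N) = (1, 0))
    (h₂ : π (e2 k N) = (0, 1)) (hc : ∀ i, π (c k N i) = 0) (x : Kron k N) :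
    x - epsS k N (π x) ∈ arrows k N := by
  let ε : k × k →ₗ[k] Kron k N :=
    (LinearMap.toSpanSingleton k _ (e1 k N)).coprod (LinearMap.toSpanSingleton k _ (e2 k N))
  have h : ⊤ ≤ (arrows k N).comap (LinearMap.id - ε ∘ₗ π) := by
    rw [← span_range_basisFam, Submodule.span_le]
    rintro _ ⟨j | i, rfl⟩
    · fin_cases j <;> simp [basisFam, ε, h₁, h₂]
    · simpa [basisFam, ε, hc] using c_mem_arrows i
  exact h Submodule.mem_top

theorem map_mem_arrows {M : ℕ} (f : Fin N → Fin M) {x : Kron k N} (hx : x ∈ arrows k N) :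
    map f x ∈ arrows k M := by
  have h : arrows k N ≤ (arrows k M).comap (map f).toLinearMap := by
    rw [arrows, Submodule.span_le]
    rintro _ ⟨i, rfl⟩
    simpa using c_mem_arrows (f i)
  exact h hx

/-- The relation `b * a = v(b ⊗ a)` behind the twisting map: `(x - ε s) * (y - ε t) = 0`. -/
theorem mul_eq_of_sub_epsS_mem_arrows {x y : Kron k N} {s t : k × k}
    (hx : x - epsS k N s ∈ arrows k N) (hy : y - epsS k N t ∈ arrows k N) :
    x * y = epsS k N s * y + x * epsS k N t - epsS k N s * epsS k N t := by
  rw [← sub_eq_zero, ← mul_eq_zero_of_mem_arrows hx hy, sub_mul, mul_sub, mul_sub]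
  abel

end Kron

section KronTensor

open Kron

variable (k : Type) [Field k] (p q : ℕ)

noncomputable def balancing : Submodule k (Kron k p ⊗[k] Kron k q) :=
  Submodule.span k
    {z | ∃ (s : k × k) (a : Kron k p) (b : Kron k q),
      z = (a * epsS k p s) ⊗ₜ[k] b - a ⊗ₜ[k] (epsS k q s * b)}

/-- `K_p ⊗_S K_q`, so that `TKron k n` is `KronTensor k 1 (n - 1)`; as there, the quotient
instance is given explicitly because instance synthesis does not find it. -/
abbrev KronTensor :=
  @HasQuotient.Quotient _ _ (@Submodule.hasQuotient k _ _ TensorProduct.addCommGroup _)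
    (balancing k p q)

end KronTensor

namespace KronTensor

open Kron

variable {k : Type} [Field k] {p q : ℕ}

noncomputable def tmul (a : Kron k p) (b : Kron k q) : KronTensor k p q :=
  Submodule.Quotient.mk (a ⊗ₜ[k] b)

theorem tmul_zero (a : Kron k p) : tmul a (0 : Kron k q) = 0 := by
  simp [tmul]

theorem tmul_mul_epsS (s : k × k) (a : Kron k p) (b : Kron k q) :
    tmul (a * epsS k p s) b = tmul a (epsS k q s * b) := by
  rw [tmul, tmul, Submodule.Quotient.eq]
  exact Submodule.subset_span ⟨s, a, b, rfl⟩

theorem tmul_eq_zero {a : Kron k p} {b : Kron k q} (s : k × k) (ha : a * epsS k p s = a)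
    (hb : epsS k q s * b = 0) : tmul a b = 0 := by
  rw [← ha, tmul_mul_epsS, hb, tmul_zero]

theorem induction_on {P : KronTensor k p q → Prop} (u : KronTensor k p q)
    (tmul : ∀ a b, P (tmul a b)) (add : ∀ u v, P u → P v → P (u + v)) : P u := by
  induction u using Submodule.Quotient.induction_on with | H z => ?_
  induction z using TensorProduct.induction_on with
  | zero => simpa [KronTensor.tmul] using tmul 0 0
  | tmul a b => exact tmul a b
  | add z z' hz hz' => exact add _ _ hz hz'

variable (k p q) in
noncomputable def mulMap : Kron k p ⊗[k] Kron k q →ₗ[k] Kron k (p + q) :=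
  TensorProduct.lift ((LinearMap.mul k _).compl₁₂ (Kron.map (Fin.castAdd q)).toLinearMap
    (Kron.map (Fin.natAdd p)).toLinearMap)

theorem balancing_le_ker_mulMap : balancing k p q ≤ LinearMap.ker (mulMap k p q) := by
  rw [balancing, Submodule.span_le]
  rintro _ ⟨s, a, b, rfl⟩
  simp [mulMap, map_epsS, mul_assoc]

variable (k p q) in
noncomputable def toKron : KronTensor k p q →ₗ[k] Kron k (p + q) :=
  (balancing k p q).liftQ (mulMap k p q) balancing_le_ker_mulMap

@[simp] theorem toKron_tmul (a : Kron k p) (b : Kron k q) :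
    toKron k p q (tmul a b) = map (Fin.castAdd q) a * map (Fin.natAdd p) b := rfl

variable (k p q) in
noncomputable def tmulFam : Fin 2 ⊕ Fin (p + q) → KronTensor k p q
  | .inl 0 => tmul (e1 k p) (e1 k q)
  | .inl 1 => tmul (e2 k p) (e2 k q)
  | .inr i => Fin.addCases (fun i => tmul (c k p i) (e1 k q)) (fun j => tmul (e2 k p) (c k q j)) i

theorem toKron_comp_tmulFam : toKron k p q ∘ tmulFam k p q = basisFam k (p + q) := by
  funext j
  rcases j with j | j
  · fin_cases j <;> simp [tmulFam, basisFam, e1_mul_e1, isIdempotentElem_e2.eq]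
  · induction j using Fin.addCases <;> simp [tmulFam, basisFam, c_mul_e1, e2_mul_c]

theorem tmul_basisFam_mem_span (i : Fin 2 ⊕ Fin p) (j : Fin 2 ⊕ Fin q) :
    tmul (basisFam k p i) (basisFam k q j) ∈ Submodule.span k (Set.range (tmulFam k p q)) := by
  have mem (j) : tmulFam k p q j ∈ Submodule.span k (Set.range (tmulFam k p q)) :=
    Submodule.subset_span ⟨j, rfl⟩
  have zero₁ {a b} (ha : a * e1 k p = a) (hb : e1 k q * b = 0) :
      tmul a b ∈ Submodule.span k (Set.range (tmulFam k p q)) := by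
    rw [tmul_eq_zero (1, 0) (by rwa [epsS_one_zero]) (by rwa [epsS_one_zero])]
    exact zero_mem _
  have zero₂ {a b} (ha : a * e2 k p = a) (hb : e2 k q * b = 0) :
      tmul a b ∈ Submodule.span k (Set.range (tmulFam k p q)) := by
    rw [tmul_eq_zero (0, 1) (by rwa [epsS_zero_one]) (by rwa [epsS_zero_one])]
    exact zero_mem _
  rcases i with i | i <;> rcases j with j | j <;> (try fin_cases i) <;> (try fin_cases j)
  · exact mem (.inl 0)
  · exact zero₁ e1_mul_e1 e1_mul_e2
  · exact zero₂ isIdempotentElem_e2.eq e2_mul_e1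
  · exact mem (.inl 1)
  · exact zero₁ e1_mul_e1 (e1_mul_c j)
  · simpa [tmulFam, basisFam] using mem (.inr (Fin.natAdd p j))
  · simpa [tmulFam, basisFam] using mem (.inr (Fin.castAdd q i))
  · exact zero₁ (c_mul_e1 i) e1_mul_e2
  · exact zero₁ (c_mul_e1 i) (e1_mul_c j)

theorem span_range_tmulFam : Submodule.span k (Set.range (tmulFam k p q)) = ⊤ := by
  have h := ((Kron.basis k p).tensorProduct (Kron.basis k q)).span_eq
  rw [eq_top_iff, ← Submodule.range_mkQ, LinearMap.range_eq_map, ← h, Submodule.map_span,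
    Submodule.span_le]
  rintro _ ⟨_, ⟨⟨i, j⟩, rfl⟩, rfl⟩
  simp only [Module.Basis.tensorProduct_apply, coe_basis]
  exact tmul_basisFam_mem_span (k := k) i j

theorem toKron_bijective : Function.Bijective (toKron k p q) := by
  refine LinearMap.bijective_of_linearIndependent_of_span_eq_top span_range_tmulFam ?_ ?_ <;>
    rw [toKron_comp_tmulFam]
  exacts [linearIndependent_basisFam, span_range_basisFam]

/-- `μ` is the multiplication `μ_v` of `K_p ⊗_S^v K_q` induced by the twisting map
`v(b ⊗ a) = ε(πB b) a ⊗ 1 + 1 ⊗ b ε(πA a) - ε(πB b) ⊗ ε(πA a)`. -/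
def IsTwistedMul (πA : Kron k p → k × k) (πB : Kron k q → k × k)
    (μ : KronTensor k p q →ₗ[k] KronTensor k p q →ₗ[k] KronTensor k p q) : Prop :=
  ∀ (a a' : Kron k p) (b b' : Kron k q),
    μ (tmul a b) (tmul a' b') =
      tmul (a * epsS k p (πB b) * a') b' + tmul a (b * epsS k q (πA a') * b')
        - tmul (a * epsS k p (πB b)) (epsS k q (πA a') * b')

variable {πA : Kron k p → k × k} {πB : Kron k q → k × k}
  {μ : KronTensor k p q →ₗ[k] KronTensor k p q →ₗ[k] KronTensor k p q}

theorem toKron_mul (hπA : ∀ a, a - epsS k p (πA a) ∈ arrows k p)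
    (hπB : ∀ b, b - epsS k q (πB b) ∈ arrows k q) (hμ : IsTwistedMul πA πB μ)
    (u v : KronTensor k p q) : toKron k p q (μ u v) = toKron k p q u * toKron k p q v := by
  induction u using induction_on with
  | add u u' hu hu' => rw [LinearMap.map_add₂, map_add, hu, hu', map_add, add_mul]
  | tmul a b =>
    induction v using induction_on with
    | add v v' hv hv' => rw [map_add, map_add, hv, hv', map_add, mul_add]
    | tmul a' b' =>
      rw [hμ, map_sub, map_add]
      simp only [toKron_tmul, map_mul, map_epsS]
      set A := Kron.map (k := k) (Fin.castAdd q)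
      set B := Kron.map (k := k) (Fin.natAdd p)
      have twist : B b * A a' = epsS k (p + q) (πB b) * A a' + B b * epsS k (p + q) (πA a')
          - epsS k (p + q) (πB b) * epsS k (p + q) (πA a') := by
        refine mul_eq_of_sub_epsS_mem_arrows ?_ ?_
        · simpa only [map_sub, map_epsS] using map_mem_arrows (Fin.natAdd p) (hπB b)
        · simpa only [map_sub, map_epsS] using map_mem_arrows (Fin.castAdd q) (hπA a')
      rw [show A a * B b * (A a' * B b') = A a * (B b * A a') * B b' by simp only [mul_assoc],
        twist]
      simp only [mul_add, add_mul, mul_sub, sub_mul, mul_assoc]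

theorem exists_linearEquiv_of_isTwistedMul {r : ℕ} (h : p + q = r)
    (hπA : ∀ a, a - epsS k p (πA a) ∈ arrows k p) (hπB : ∀ b, b - epsS k q (πB b) ∈ arrows k q)
    (hμ : IsTwistedMul πA πB μ) :
    ∃ e : Kron k r ≃ₗ[k] KronTensor k p q,
      e 1 = tmul 1 1 ∧ ∀ x y : Kron k r, e (x * y) = μ (e x) (e y) := by
  subst h
  let e := LinearEquiv.ofBijective (toKron k p q) toKron_bijective
  refine ⟨e.symm, e.symm_apply_eq.mpr ?_, fun x y => e.symm_apply_eq.mpr ?_⟩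
  · simp [e]
  · simp [e, toKron_mul hπA hπB hμ]

end KronTensor

/-- `K_n ≅ K₁ ⊗_S^v K_{n−1}` over `S = k × k`, where `v` is the twisting map
`v(b ⊗ a) = ε(π'(b))·a ⊗ 1 + 1 ⊗ b·ε'(π(a)) − ε(π'(b)) ⊗ ε'(π(a))` built from the
natural augmentations `π : K₁ → S` and `π' : K_{n−1} → S` killing the arrows:
for the multiplication `μ_v` on `K₁ ⊗_S K_{n−1}` induced by `v`, there is a `k`-linear
bijection `e : K_n → K₁ ⊗_S K_{n−1}` with `e 1 = 1 ⊗ 1` carrying the multiplication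
of `K_n` to `μ_v`. -/
theorem stmt_8 (k : Type) [Field k] (n : ℕ) (hn : 1 ≤ n)
    (πA : Kron k 1 →ₐ[k] (k × k))
    (hπA1 : πA (qE1 k 1 0 (emptyFam k 1) (emptyFam k 1)) = (1, 0))
    (hπA2 : πA (qE2 k 1 0 (emptyFam k 1) (emptyFam k 1)) = (0, 1))
    (hπA3 : ∀ i, πA (qC k 1 0 (emptyFam k 1) (emptyFam k 1) i) = 0)
    (πB : Kron k (n - 1) →ₐ[k] (k × k))
    (hπB1 : πB (qE1 k (n-1) 0 (emptyFam k (n-1)) (emptyFam k (n-1))) = (1, 0))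
    (hπB2 : πB (qE2 k (n-1) 0 (emptyFam k (n-1)) (emptyFam k (n-1))) = (0, 1))
    (hπB3 : ∀ i, πB (qC k (n-1) 0 (emptyFam k (n-1)) (emptyFam k (n-1)) i) = 0)
    (μ : TKron k n →ₗ[k] TKron k n →ₗ[k] TKron k n)
    (hμ : ∀ (a a' : Kron k 1) (b b' : Kron k (n - 1)),
      μ (qK k n a b) (qK k n a' b') =
        qK k n (a * epsS k 1 (πB b) * a') b'
          + qK k n a (b * epsS k (n - 1) (πA a') * b')
          - qK k n (a * epsS k 1 (πB b)) (epsS k (n - 1) (πA a') * b')) :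
    ∃ e : Kron k n ≃ₗ[k] TKron k n,
      e 1 = qK k n 1 1 ∧ ∀ x y : Kron k n, e (x * y) = μ (e x) (e y) :=
  KronTensor.exists_linearEquiv_of_isTwistedMul (by omega)
    (Kron.sub_epsS_mem_arrows πA.toLinearMap hπA1 hπA2 hπA3)
    (Kron.sub_epsS_mem_arrows πB.toLinearMap hπB1 hπB2 hπB3) hμ
end

section
/- Let Q_{n,m} be the quiver with two vertices and n arrows c₁,…,c_n from vertex 1 to vertex 2 and m arrows b₁,…,b_m from vertex 2 to vertex 1, C the span of the c_i, B the span of the b_j. Fix k-subspaces V₁,…,V_m ⊆ C of dimension t and W₁,…,W_m ⊆ C of codimension t, and let R_F = kQ_{n,m}/I_F where I_F is generated by the relations: b c b' = 0 for all c ∈ C, b, b' ∈ B; w b_i = 0 for all w ∈ W_i; b_i v = 0 for all v ∈ V_i. Choose subspaces V, W ⊆ C with dim V = t, dim W = n − t, V ∩ W_i = 0, W ∩ V_i = 0 for all i, and V ⊕ W = C. Then as vector spaces: e₁ R_F e₁ = ⟨e₁⟩ ⊕ ⊕_j b_j W, e₁ R_F e₂ = B, e₂ R_F e₁ = C ⊕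 ⊕_j V b_j W, and e₂ R_F e₂ = ⟨e₂⟩ ⊕ ⊕_j V b_j. -/
section

variable (k : Type) [Field k] (n m : ℕ) (V W : Fin m → Submodule k (Fin n → k))

/-- The corner subspace `x · R_F · y` of `R_F`. -/
noncomputable def cornerSub (x y : RF k n m V W) : Submodule k (RF k n m V W) :=
  LinearMap.range ((LinearMap.mulLeft k x).comp (LinearMap.mulRight k y))

/-- The subspace `b_j W₀ ⊆ R_F` for a subspace `W₀ ⊆ C = k^n`. -/
noncomputable def bWsub (W₀ : Submodule k (Fin n → k)) (j : Fin m) :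
    Submodule k (RF k n m V W) :=
  Submodule.map ((LinearMap.mulLeft k (qB k n m V W j)).comp (qlc k n m V W)) W₀

/-- The subspace `V₀ b_j ⊆ R_F` for a subspace `V₀ ⊆ C = k^n`. -/
noncomputable def VbSub (V₀ : Submodule k (Fin n → k)) (j : Fin m) :
    Submodule k (RF k n m V W) :=
  Submodule.map ((LinearMap.mulRight k (qB k n m V W j)).comp (qlc k n m V W)) V₀

/-- The subspace `V₀ b_j W₀ ⊆ R_F`. -/
noncomputable def VbWsub (V₀ W₀ : Submodule k (Fin n → k)) (j : Fin m) :
    Submodule k (RF k n m V W) :=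
  Submodule.span k {x | ∃ v ∈ V₀, ∃ w ∈ W₀,
    x = qlc k n m V W v * qB k n m V W j * qlc k n m V W w}

end

section LinearAlgebra

open LinearMap

theorem mul_mem_span_of_forall_mul_mem {R A : Type*} [CommSemiring R] [Semiring A] [Algebra R A]
    {s : Set A} {g x : A} (hg : ∀ y ∈ s, g * y ∈ Submodule.span R s)
    (hx : x ∈ Submodule.span R s) : g * x ∈ Submodule.span R s :=
  Submodule.span_le (p := (Submodule.span R s).comap (mulLeft R g)) |>.2 hg hx

theorem mem_range_mulLeft_comp_mulRight_iff {R A : Type*} [CommSemiring R] [Semiring A]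
    [Algebra R A] {e f : A} (he : IsIdempotentElem e) (hf : IsIdempotentElem f) {z : A} :
    z ∈ range (mulLeft R e ∘ₗ mulRight R f) ↔ e * z * f = z := by
  constructor
  · rintro ⟨x, rfl⟩
    simp only [comp_apply, mulLeft_apply, mulRight_apply, ← mul_assoc, he.eq]
    rw [mul_assoc _ f, hf.eq]
  · intro h
    exact ⟨z, by simpa [mul_assoc] using h⟩

theorem OrthogonalIdempotents.range_mulLeft_comp_mulRight_eq {R A I : Type*} [CommSemiring R]
    [Semiring A] [Algebra R A] {e : I → A} (he : OrthogonalIdempotents e)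
    {S : I → I → Submodule R A}
    (hS : ∀ i j, S i j ≤ range (mulLeft R (e i) ∘ₗ mulRight R (e j)))
    (htop : ⨆ i, ⨆ j, S i j = ⊤) (i j : I) :
    range (mulLeft R (e i) ∘ₗ mulRight R (e j)) = S i j := by
  refine le_antisymm ?_ (hS i j)
  rw [range_eq_map, ← htop]
  simp only [Submodule.map_iSup, iSup_le_iff]
  rintro i' j' _ ⟨z, hz, rfl⟩
  have hz' := (mem_range_mulLeft_comp_mulRight_iff (he.idem i') (he.idem j')).1 (hS i' j' hz)
  have : e i * (z * e j) = e i * e i' * z * (e j' * e j) := by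
    conv_lhs => rw [← hz']
    simp only [mul_assoc]
  simp only [comp_apply, mulLeft_apply, mulRight_apply, this]
  obtain rfl | hi := eq_or_ne i i'
  · obtain rfl | hj := eq_or_ne j' j
    · rwa [(he.idem i).eq, (he.idem j').eq, hz']
    · simp [he.ortho hj]
  · simp [he.ortho hi]

theorem disjoint_range_of_leftInverse {R M N : Type*} [Semiring R] [AddCommMonoid M] [Module R M]
    [AddCommMonoid N] [Module R N] {φ : N →ₗ[R] M} {q : M →ₗ[R] N} (hq : ∀ a, q (φ a) = a)
    {K : Submodule R M} (hK : K ≤ ker q) : Disjoint (range φ) K := by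
  rw [Submodule.disjoint_def]
  rintro _ ⟨a, rfl⟩ hx
  rw [← hq a, hK hx, map_zero]

theorem iSupIndep_option_elim_range {R M N₀ N ι : Type*} [Semiring R] [AddCommMonoid M]
    [Module R M] [AddCommMonoid N₀] [Module R N₀] [AddCommMonoid N] [Module R N] [DecidableEq ι]
    (φ₀ : N₀ →ₗ[R] M) (φ : ι → N →ₗ[R] M) (p₀ : M →ₗ[R] N₀) (p : M →ₗ[R] ι → N)
    (hp₀φ₀ : ∀ a, p₀ (φ₀ a) = a) (hpφ₀ : ∀ a, p (φ₀ a) = 0)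
    (hp₀φ : ∀ j b, p₀ (φ j b) = 0) (hpφ : ∀ j b, p (φ j b) = Pi.single j b) :
    iSupIndep fun o : Option ι => o.elim (range φ₀) fun j => range (φ j) := by
  rintro (_ | i)
  · refine disjoint_range_of_leftInverse hp₀φ₀ (iSup₂_le fun o ho => ?_)
    obtain _ | j := o
    · exact absurd rfl ho
    · rintro _ ⟨b, rfl⟩
      exact hp₀φ j b
  · refine disjoint_range_of_leftInverse (q := proj i ∘ₗ p) (by simp [hpφ])
      (iSup₂_le fun o ho => ?_)
    obtain _ | j := o
    · rintro _ ⟨a, rfl⟩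
      simp [hpφ₀]
    · rintro _ ⟨b, rfl⟩
      have hji : j ≠ i := fun h => ho (h ▸ rfl)
      simp [hpφ, Pi.single_eq_of_ne' hji]

end LinearAlgebra

section Relations

variable {k : Type} [Field k] {n m : ℕ} {V W : Fin m → Submodule k (Fin n → k)}

local notation "e₁" => qE1 k n m V W
local notation "e₂" => qE2 k n m V W
local notation "β" => qB k n m V W
local notation "ℓ" => qlc k n m V W

theorem prF_eq_of_relF {x y : FreeAlgebra k (QGen n m)} (h : relF k n m V W x y) :
    prF k n m V W x = prF k n m V W y :=
  RingQuot.mkAlgHom_rel k h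

theorem qlc_apply (u : Fin n → k) : ℓ u = prF k n m V W (glc k n m u) := rfl

@[simp] theorem qE1_mul_qE1 : e₁ * e₁ = e₁ := by
  simpa only [qE1, map_mul] using prF_eq_of_relF relF.idem1

@[simp] theorem qE2_mul_qE2 : e₂ * e₂ = e₂ := by
  simpa only [qE2, map_mul] using prF_eq_of_relF relF.idem2

@[simp] theorem qE1_mul_qE2 : e₁ * e₂ = 0 := by
  simpa only [qE1, qE2, map_mul, map_zero] using prF_eq_of_relF relF.orth12

@[simp] theorem qE2_mul_qE1 : e₂ * e₁ = 0 := by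
  simpa only [qE1, qE2, map_mul, map_zero] using prF_eq_of_relF relF.orth21

theorem qE1_add_qE2 : e₁ + e₂ = 1 := by
  simpa only [qE1, qE2, map_add, map_one] using prF_eq_of_relF relF.unit

theorem qlc_eq_sum (u : Fin n → k) : ℓ u = ∑ i, u i • qC k n m V W i := by
  simp [qlc, glc, qC]

theorem qlc_single (i : Fin n) : ℓ (Pi.single i 1) = qC k n m V W i := by
  simp [qlc_eq_sum, Pi.single_apply]

@[simp] theorem qE2_mul_qlc (u : Fin n → k) : e₂ * ℓ u = ℓ u := by
  have (i : Fin n) : e₂ * qC k n m V W i = qC k n m V W i := by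
    simpa only [qE2, qC, map_mul] using prF_eq_of_relF (relF.cLeft i)
  simp [qlc_eq_sum, Finset.mul_sum, this]

@[simp] theorem qlc_mul_qE1 (u : Fin n → k) : ℓ u * e₁ = ℓ u := by
  have (i : Fin n) : qC k n m V W i * e₁ = qC k n m V W i := by
    simpa only [qE1, qC, map_mul] using prF_eq_of_relF (relF.cRight i)
  simp [qlc_eq_sum, Finset.sum_mul, this]

@[simp] theorem qE1_mul_qB (j : Fin m) : e₁ * β j = β j := by
  simpa only [qE1, qB, map_mul] using prF_eq_of_relF (relF.bLeft j)

@[simp] theorem qB_mul_qE2 (j : Fin m) : β j * e₂ = β j := by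
  simpa only [qE2, qB, map_mul] using prF_eq_of_relF (relF.bRight j)

@[simp] theorem qB_mul_qlc_mul_qB (j j' : Fin m) (u : Fin n → k) :
    β j * ℓ u * β j' = 0 := by
  have (i : Fin n) : β j * qC k n m V W i * β j' = 0 := by
    simpa only [qB, qC, map_mul, map_zero] using prF_eq_of_relF (relF.bcb i j j')
  simp [qlc_eq_sum, Finset.sum_mul, Finset.mul_sum, this]

theorem qlc_mul_qB_of_mem {j : Fin m} {w : Fin n → k} (hw : w ∈ W j) : ℓ w * β j = 0 := by
  simpa only [qB, qlc_apply, map_mul, map_zero] using prF_eq_of_relF (relF.wb j w hw)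

theorem qB_mul_qlc_of_mem {j : Fin m} {v : Fin n → k} (hv : v ∈ V j) : β j * ℓ v = 0 := by
  simpa only [qB, qlc_apply, map_mul, map_zero] using prF_eq_of_relF (relF.bv j v hv)

@[simp] theorem qE1_mul_qlc (u : Fin n → k) : e₁ * ℓ u = 0 := by
  rw [← qE2_mul_qlc, ← mul_assoc, qE1_mul_qE2, zero_mul]

@[simp] theorem qlc_mul_qE2 (u : Fin n → k) : ℓ u * e₂ = 0 := by
  rw [← qlc_mul_qE1, mul_assoc, qE1_mul_qE2, mul_zero]

@[simp] theorem qE2_mul_qB (j : Fin m) : e₂ * β j = 0 := by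
  rw [← qE1_mul_qB, ← mul_assoc, qE2_mul_qE1, zero_mul]

@[simp] theorem qB_mul_qE1 (j : Fin m) : β j * e₁ = 0 := by
  rw [← qB_mul_qE2, mul_assoc, qE2_mul_qE1, mul_zero]

@[simp] theorem qB_mul_qB (j j' : Fin m) : β j * β j' = 0 := by
  rw [← qE1_mul_qB j', ← mul_assoc, qB_mul_qE1, zero_mul]

@[simp] theorem qlc_mul_qlc (u u' : Fin n → k) : ℓ u * ℓ u' = 0 := by
  rw [← qE2_mul_qlc u', ← mul_assoc, qlc_mul_qE2, zero_mul]

theorem exists_mem_qB_mul_qlc_eq {W₀ : Submodule k (Fin n → k)} {j : Fin m}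
    (h : Codisjoint W₀ (V j)) (u : Fin n → k) : ∃ w ∈ W₀, β j * ℓ u = β j * ℓ w := by
  obtain ⟨w, hw, v, hv, rfl⟩ := Submodule.mem_sup.1 (h.eq_top ▸ Submodule.mem_top (x := u))
  exact ⟨w, hw, by rw [map_add, mul_add, qB_mul_qlc_of_mem hv, add_zero]⟩

theorem exists_mem_qlc_mul_qB_eq {V₀ : Submodule k (Fin n → k)} {j : Fin m}
    (h : Codisjoint V₀ (W j)) (u : Fin n → k) : ∃ v ∈ V₀, ℓ u * β j = ℓ v * β j := by
  obtain ⟨v, hv, w, hw, rfl⟩ := Submodule.mem_sup.1 (h.eq_top ▸ Submodule.mem_top (x := u))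
  exact ⟨v, hv, by rw [map_add, add_mul, qlc_mul_qB_of_mem hw, add_zero]⟩

end Relations

section Spanning

variable {k : Type} [Field k] {n m : ℕ} {V W : Fin m → Submodule k (Fin n → k)}
  {V₀ W₀ : Submodule k (Fin n → k)}

local notation "e₁" => qE1 k n m V W
local notation "e₂" => qE2 k n m V W
local notation "β" => qB k n m V W
local notation "ℓ" => qlc k n m V W

variable (V W V₀ W₀) in
inductive IsNormalMonomial : RF k n m V W → Prop
  | vertex₁ : IsNormalMonomial e₁
  | vertex₂ : IsNormalMonomial e₂
  | c (u : Fin n → k) : IsNormalMonomial (ℓ u)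
  | b (j : Fin m) : IsNormalMonomial (β j)
  | bw (j : Fin m) {w : Fin n → k} (hw : w ∈ W₀) : IsNormalMonomial (β j * ℓ w)
  | vb (j : Fin m) {v : Fin n → k} (hv : v ∈ V₀) : IsNormalMonomial (ℓ v * β j)
  | vbw (j : Fin m) {v w : Fin n → k} (hv : v ∈ V₀) (hw : w ∈ W₀) :
      IsNormalMonomial (ℓ v * β j * ℓ w)

local notation "N" => Submodule.span k (Set.ofPred (IsNormalMonomial V W V₀ W₀))

theorem mem_span_of_isNormalMonomial {x : RF k n m V W} (hx : IsNormalMonomial V W V₀ W₀ x) :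
    x ∈ N :=
  Submodule.subset_span hx

theorem qE1_mul_mem_span_isNormalMonomial {x : RF k n m V W}
    (hx : IsNormalMonomial V W V₀ W₀ x) : e₁ * x ∈ N := by
  cases hx <;> simp [← mul_assoc, mem_span_of_isNormalMonomial, IsNormalMonomial.vertex₁,
    IsNormalMonomial.b, IsNormalMonomial.bw, *]

theorem qE2_mul_mem_span_isNormalMonomial {x : RF k n m V W}
    (hx : IsNormalMonomial V W V₀ W₀ x) : e₂ * x ∈ N := by
  cases hx <;> simp [← mul_assoc, mem_span_of_isNormalMonomial, IsNormalMonomial.vertex₂,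
    IsNormalMonomial.c, IsNormalMonomial.vb, IsNormalMonomial.vbw, *]

theorem qlc_mul_mem_span_isNormalMonomial (hP : ∀ j, Codisjoint V₀ (W j)) (u : Fin n → k)
    {x : RF k n m V W} (hx : IsNormalMonomial V W V₀ W₀ x) : ℓ u * x ∈ N := by
  cases hx with
  | vertex₁ => exact mem_span_of_isNormalMonomial (by simpa using .c u)
  | b j =>
    obtain ⟨v, hv, h⟩ := exists_mem_qlc_mul_qB_eq (hP j) u
    exact h ▸ mem_span_of_isNormalMonomial (.vb j hv)
  | bw j hw =>
    obtain ⟨v, hv, h⟩ := exists_mem_qlc_mul_qB_eq (hP j) u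
    rw [← mul_assoc, h]
    exact mem_span_of_isNormalMonomial (.vbw j hv hw)
  | _ => simp [← mul_assoc]

theorem qB_mul_mem_span_isNormalMonomial (hQ : ∀ j, Codisjoint W₀ (V j)) (j : Fin m)
    {x : RF k n m V W} (hx : IsNormalMonomial V W V₀ W₀ x) : β j * x ∈ N := by
  cases hx with
  | vertex₂ => exact mem_span_of_isNormalMonomial (by simpa using .b j)
  | c u =>
    obtain ⟨w, hw, h⟩ := exists_mem_qB_mul_qlc_eq (hQ j) u
    exact h ▸ mem_span_of_isNormalMonomial (.bw j hw)
  | _ => simp [← mul_assoc]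

theorem span_isNormalMonomial_eq_top (hP : ∀ j, Codisjoint V₀ (W j))
    (hQ : ∀ j, Codisjoint W₀ (V j)) : N = ⊤ := by
  have hmul (y : FreeAlgebra k (QGen n m)) {x : RF k n m V W} (hx : x ∈ N) :
      prF k n m V W y * x ∈ N := by
    induction y using FreeAlgebra.induction generalizing x with
    | grade0 r => simpa [Algebra.algebraMap_eq_smul_one] using Submodule.smul_mem N r hx
    | grade1 g =>
      refine mul_mem_span_of_forall_mul_mem (fun y hy => ?_) hx
      cases g with
      | e1 => exact qE1_mul_mem_span_isNormalMonomial hy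
      | e2 => exact qE2_mul_mem_span_isNormalMonomial hy
      | c i =>
        have := qlc_mul_mem_span_isNormalMonomial hP (Pi.single i 1) hy
        rwa [qlc_single] at this
      | b j => exact qB_mul_mem_span_isNormalMonomial hQ j hy
    | mul a b ha hb => simpa [mul_assoc] using ha (hb hx)
    | add a b ha hb => simpa [add_mul] using add_mem (ha hx) (hb hx)
  have hone : (1 : RF k n m V W) ∈ N := by
    rw [← qE1_add_qE2]
    exact add_mem (mem_span_of_isNormalMonomial .vertex₁) (mem_span_of_isNormalMonomial .vertex₂)
  refine eq_top_iff.2 fun x _ => ?_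
  obtain ⟨y, rfl⟩ := RingQuot.mkAlgHom_surjective k (relF k n m V W) x
  exact mul_one (prF k n m V W y) ▸ hmul y hone

end Spanning

section Corners

variable {k : Type} [Field k] {n m : ℕ} {V W : Fin m → Submodule k (Fin n → k)}
  {V₀ W₀ : Submodule k (Fin n → k)}

local notation "e₁" => qE1 k n m V W
local notation "e₂" => qE2 k n m V W
local notation "β" => qB k n m V W
local notation "ℓ" => qlc k n m V W

theorem orthogonalIdempotents_qE : OrthogonalIdempotents ![e₁, e₂] :=
  (CompleteOrthogonalIdempotents.pair_iff'ₛ.2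
    ⟨qE1_mul_qE2, qE2_mul_qE1, qE1_add_qE2⟩).toOrthogonalIdempotents

theorem mem_cornerSub_iff {x y z : RF k n m V W} (hx : IsIdempotentElem x)
    (hy : IsIdempotentElem y) : z ∈ cornerSub k n m V W x y ↔ x * z * y = z :=
  mem_range_mulLeft_comp_mulRight_iff hx hy

variable (V W V₀ W₀) in
/-- The summands of `eᵢ R_F eⱼ`; index `0 : Fin 2` stands for vertex `1`, `1` for vertex `2`. -/
noncomputable def peirceBlock : Fin 2 → Fin 2 → Submodule k (RF k n m V W) :=
  ![![Submodule.span k {e₁} ⊔ ⨆ j, bWsub k n m V W W₀ j, Submodule.span k (Set.range β)],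
    ![LinearMap.range ℓ ⊔ ⨆ j, VbWsub k n m V W V₀ W₀ j,
      Submodule.span k {e₂} ⊔ ⨆ j, VbSub k n m V W V₀ j]]

theorem peirceBlock_le_cornerSub :
    ∀ i j, peirceBlock V W V₀ W₀ i j ≤ cornerSub k n m V W (![e₁, e₂] i) (![e₁, e₂] j) := by
  have h₁ : IsIdempotentElem e₁ := qE1_mul_qE1
  have h₂ : IsIdempotentElem e₂ := qE2_mul_qE2
  simp only [Fin.forall_fin_two, peirceBlock, Matrix.cons_val_zero, Matrix.cons_val_one]
  refine ⟨⟨sup_le ?_ (iSup_le fun j => ?_), ?_⟩, sup_le ?_ (iSup_le fun j => ?_),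
    sup_le ?_ (iSup_le fun j => ?_)⟩
  · rw [Submodule.span_singleton_le_iff_mem, mem_cornerSub_iff h₁ h₁]
    simp
  · rintro _ ⟨w, -, rfl⟩
    rw [mem_cornerSub_iff h₁ h₁]
    simp only [LinearMap.comp_apply, LinearMap.mulLeft_apply, mul_assoc, qlc_mul_qE1]
    rw [← mul_assoc, qE1_mul_qB]
  · rw [Submodule.span_le]
    rintro _ ⟨j, rfl⟩
    rw [SetLike.mem_coe, mem_cornerSub_iff h₁ h₂]
    simp
  · rintro _ ⟨u, rfl⟩
    rw [mem_cornerSub_iff h₂ h₁]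
    simp
  · rw [VbWsub, Submodule.span_le]
    rintro _ ⟨v, -, w, -, rfl⟩
    rw [SetLike.mem_coe, mem_cornerSub_iff h₂ h₁]
    simp only [mul_assoc, qlc_mul_qE1]
    rw [← mul_assoc, qE2_mul_qlc]
  · rw [Submodule.span_singleton_le_iff_mem, mem_cornerSub_iff h₂ h₂]
    simp
  · rintro _ ⟨v, -, rfl⟩
    rw [mem_cornerSub_iff h₂ h₂]
    simp only [LinearMap.comp_apply, LinearMap.mulRight_apply, mul_assoc, qB_mul_qE2]
    rw [← mul_assoc, qE2_mul_qlc]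

theorem iSup_peirceBlock_eq_top (hP : ∀ j, Codisjoint V₀ (W j))
    (hQ : ∀ j, Codisjoint W₀ (V j)) : ⨆ i, ⨆ j, peirceBlock V W V₀ W₀ i j = ⊤ := by
  refine eq_top_iff.2 <| (span_isNormalMonomial_eq_top hP hQ).ge.trans <|
    Submodule.span_le.2 fun x hx => ?_
  have mem (i j : Fin 2) {x : RF k n m V W} (h : x ∈ peirceBlock V W V₀ W₀ i j) :
      x ∈ ⨆ i, ⨆ j, peirceBlock V W V₀ W₀ i j :=
    Submodule.mem_iSup_of_mem i (Submodule.mem_iSup_of_mem j h)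
  open Submodule in
  cases hx with
  | vertex₁ => exact mem 0 0 (mem_sup_left (mem_span_singleton_self _))
  | vertex₂ => exact mem 1 1 (mem_sup_left (mem_span_singleton_self _))
  | c u => exact mem 1 0 (mem_sup_left (LinearMap.mem_range_self _ u))
  | b j => exact mem 0 1 (subset_span ⟨j, rfl⟩)
  | bw j hw => exact mem 0 0 (mem_sup_right (mem_iSup_of_mem j ⟨_, hw, rfl⟩))
  | vb j hv => exact mem 1 1 (mem_sup_right (mem_iSup_of_mem j ⟨_, hv, rfl⟩))
  | vbw j hv hw =>
    exact mem 1 0 (mem_sup_right (mem_iSup_of_mem j (subset_span ⟨_, hv, _, hw, rfl⟩)))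

theorem cornerSub_qE_eq_peirceBlock (hP : ∀ j, Codisjoint V₀ (W j))
    (hQ : ∀ j, Codisjoint W₀ (V j)) (i j : Fin 2) :
    cornerSub k n m V W (![e₁, e₂] i) (![e₁, e₂] j) = peirceBlock V W V₀ W₀ i j :=
  orthogonalIdempotents_qE.range_mulLeft_comp_mulRight_eq peirceBlock_le_cornerSub
    (iSup_peirceBlock_eq_top hP hQ) i j

end Corners

section NormalForm

open scoped TensorProduct

variable {k : Type} [Field k] {n m : ℕ} {V W : Fin m → Submodule k (Fin n → k)}
  {V₀ W₀ : Submodule k (Fin n → k)}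

local notation "e₁" => qE1 k n m V W
local notation "e₂" => qE2 k n m V W
local notation "β" => qB k n m V W
local notation "ℓ" => qlc k n m V W

variable (m V₀ W₀) in
/-- The coordinates of `R_F = e₁R_F ⊕ e₂R_F` in the normal form
`e₁R_F = ⟨e₁⟩ ⊕ ⨁ⱼ bⱼW₀ ⊕ B` and `e₂R_F = C ⊕ ⨁ⱼ V₀bⱼW₀ ⊕ ⟨e₂⟩ ⊕ ⨁ⱼ V₀bⱼ`; `nfE₁`, `nfE₂`,
`nfC`, `nfB` below are left multiplication by the generators in these coordinates. -/
abbrev NormalForm : Type :=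
  (k × (Fin m → W₀) × (Fin m → k)) × ((Fin n → k) × (Fin m → V₀ ⊗[k] W₀) × k × (Fin m → V₀))

variable (m V₀ W₀) in
noncomputable def nfE₁ : Module.End k (NormalForm m V₀ W₀) :=
  LinearMap.inl k _ _ ∘ₗ LinearMap.fst k _ _

variable (m V₀ W₀) in
noncomputable def nfE₂ : Module.End k (NormalForm m V₀ W₀) :=
  LinearMap.inr k _ _ ∘ₗ LinearMap.snd k _ _

/-- `u · (a e₁ + ∑ bⱼ wⱼ + ∑ βⱼ bⱼ) = a u + ∑ (Pⱼ u) bⱼ wⱼ + ∑ βⱼ (Pⱼ u) bⱼ`, where `Pⱼ` projects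
onto `V₀` along `W j`. -/
noncomputable def nfC (hP : ∀ j, IsCompl V₀ (W j)) :
    (Fin n → k) →ₗ[k] Module.End k (NormalForm m V₀ W₀) :=
  LinearMap.mk₂ k
    (fun u x => (0, x.1.1 • u, fun j => V₀.projectionOnto (W j) (hP j) u ⊗ₜ x.1.2.1 j, 0,
      fun j => x.1.2.2 j • V₀.projectionOnto (W j) (hP j) u))
    (fun u u' x => by simp [Prod.ext_iff, funext_iff, smul_add, TensorProduct.add_tmul])
    (fun c u x => by simp [Prod.ext_iff, funext_iff, TensorProduct.smul_tmul', smul_comm c])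
    (fun u x y => by simp [Prod.ext_iff, funext_iff, add_smul, TensorProduct.tmul_add])
    (fun c u x => by simp [Prod.ext_iff, funext_iff, mul_smul])

/-- `bⱼ · (u + ∑ vₗ bₗ wₗ + a e₂ + ∑ vₗ bₗ) = bⱼ (Qⱼ u) + a bⱼ`, where `Qⱼ` projects onto `W₀`
along `V j`. -/
noncomputable def nfB (hQ : ∀ j, IsCompl W₀ (V j)) (j : Fin m) :
    Module.End k (NormalForm m V₀ W₀) where
  toFun x := ((0, Pi.single j (W₀.projectionOnto (V j) (hQ j) x.2.1), Pi.single j x.2.2.2.1), 0)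
  map_add' x y := by
    simp only [Prod.fst_add, Prod.snd_add, map_add, Pi.single_add, Prod.mk_add_mk, add_zero]
  map_smul' c x := by
    simp only [Prod.smul_fst, Prod.smul_snd, map_smul, Pi.single_smul', Prod.smul_mk,
      RingHom.id_apply, smul_zero]

variable (hP : ∀ j, IsCompl V₀ (W j)) (hQ : ∀ j, IsCompl W₀ (V j))

noncomputable def nfFreeRep : FreeAlgebra k (QGen n m) →ₐ[k] Module.End k (NormalForm m V₀ W₀) :=
  FreeAlgebra.lift k fun
    | .e1 => nfE₁ m V₀ W₀
    | .e2 => nfE₂ m V₀ W₀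
    | .c i => nfC hP (Pi.single i 1)
    | .b j => nfB hQ j

theorem nfFreeRep_glc (u : Fin n → k) : nfFreeRep hP hQ (glc k n m u) = nfC hP u := by
  conv_rhs => rw [← Finset.univ_sum_single u]
  simp only [glc, gC, nfFreeRep, LinearMap.sum_apply, LinearMap.comp_apply,
    LinearMap.proj_apply, LinearMap.toSpanSingleton_apply, map_sum, map_smul,
    FreeAlgebra.lift_ι_apply]
  refine Finset.sum_congr rfl fun i _ => ?_
  rw [← map_smul, ← Pi.single_smul', smul_eq_mul, mul_one]

theorem nfFreeRep_rel {x y : FreeAlgebra k (QGen n m)} (h : relF k n m V W x y) :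
    nfFreeRep hP hQ x = nfFreeRep hP hQ y := by
  induction h with
  | wb j w hw =>
    have hPw : V₀.projectionOnto (W j) (hP j) w = 0 :=
      Submodule.projectionOnto_apply_of_mem_right (hP j) hw
    rw [map_mul, map_zero, nfFreeRep_glc]
    refine LinearMap.ext fun x => ?_
    simp only [nfFreeRep, gB, FreeAlgebra.lift_ι_apply, Module.End.mul_apply, nfB, nfC,
      LinearMap.mk₂_apply, LinearMap.coe_mk, AddHom.coe_mk, LinearMap.zero_apply]
    refine Prod.ext (by simp) (Prod.ext (by simp) (Prod.ext (funext fun j' => ?_)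
      (Prod.ext (by simp) (funext fun j' => ?_)))) <;>
    · rcases eq_or_ne j' j with rfl | hj
      · simp [hPw]
      · simp [hj]
  | bv j v hv =>
    have hQv : W₀.projectionOnto (V j) (hQ j) v = 0 :=
      Submodule.projectionOnto_apply_of_mem_right (hQ j) hv
    rw [map_mul, map_zero, nfFreeRep_glc]
    refine LinearMap.ext fun x => ?_
    simp [nfFreeRep, gB, nfB, nfC, hQv]
  | _ =>
    refine LinearMap.ext fun x => ?_
    simp [nfFreeRep, gE1, gE2, gC, gB, nfE₁, nfE₂, nfC, nfB, Prod.ext_iff]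

noncomputable def nfRep : RF k n m V W →ₐ[k] Module.End k (NormalForm m V₀ W₀) :=
  RingQuot.liftAlgHom k ⟨nfFreeRep hP hQ, fun _ _ => nfFreeRep_rel hP hQ⟩

theorem nfRep_prF (x : FreeAlgebra k (QGen n m)) :
    nfRep hP hQ (prF k n m V W x) = nfFreeRep hP hQ x :=
  RingQuot.liftAlgHom_mkAlgHom_apply _ _ _ _

/-- The normal form of `x ∈ R_F`: the action of `x` on `e₁ + e₂ = 1`. -/
noncomputable def normalForm : RF k n m V W →ₗ[k] NormalForm m V₀ W₀ :=
  LinearMap.applyₗ ((1, 0, 0), (0, 0, 1, 0)) ∘ₗ (nfRep hP hQ).toLinearMap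

theorem normalForm_mul (x y : RF k n m V W) :
    normalForm hP hQ (x * y) = nfRep hP hQ x (normalForm hP hQ y) := by
  simp [normalForm, Module.End.mul_apply]

theorem normalForm_qE1 : normalForm hP hQ e₁ = ((1, 0, 0), 0) := by
  simp [normalForm, qE1, nfRep_prF, nfFreeRep, gE1, nfE₁]

theorem normalForm_qE2 : normalForm hP hQ e₂ = (0, 0, 0, 1, 0) := by
  simp [normalForm, qE2, nfRep_prF, nfFreeRep, gE2, nfE₂]

theorem nfRep_qlc (u : Fin n → k) : nfRep hP hQ (ℓ u) = nfC hP u := by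
  rw [qlc_apply, nfRep_prF, nfFreeRep_glc]

theorem nfRep_qB (j : Fin m) : nfRep hP hQ (β j) = nfB hQ j := by
  simp [qB, nfRep_prF, nfFreeRep, gB]

theorem normalForm_qlc (u : Fin n → k) : normalForm hP hQ (ℓ u) = (0, u, 0, 0, 0) := by
  simp [normalForm, nfRep_qlc, nfC, Prod.ext_iff, funext_iff]

theorem normalForm_qB (j : Fin m) : normalForm hP hQ (β j) = ((0, 0, Pi.single j 1), 0) := by
  simp [normalForm, nfRep_qB, nfB]

theorem normalForm_qB_mul_qlc (j : Fin m) (u : Fin n → k) :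
    normalForm hP hQ (β j * ℓ u) = ((0, Pi.single j (W₀.projectionOnto (V j) (hQ j) u), 0), 0) := by
  simp [normalForm_mul, normalForm_qlc, nfRep_qB, nfB]

theorem normalForm_qlc_mul_qB (j : Fin m) (u : Fin n → k) :
    normalForm hP hQ (ℓ u * β j) =
      (0, 0, 0, 0, Pi.single j (V₀.projectionOnto (W j) (hP j) u)) := by
  simp only [normalForm_mul, normalForm_qB, nfRep_qlc, nfC, LinearMap.mk₂_apply]
  simp only [Prod.ext_iff, funext_iff]
  refine ⟨by simp, by simp, fun j' => by simp, by simp, fun j' => ?_⟩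
  rcases eq_or_ne j' j with rfl | hj <;> simp [*]

theorem normalForm_qlc_mul_qB_mul_qlc (j : Fin m) (u u' : Fin n → k) :
    normalForm hP hQ (ℓ u * β j * ℓ u') = (0, 0, Pi.single j
      (V₀.projectionOnto (W j) (hP j) u ⊗ₜ W₀.projectionOnto (V j) (hQ j) u'), 0, 0) := by
  simp only [mul_assoc, normalForm_mul, normalForm_qlc, nfRep_qlc, nfRep_qB, nfB, nfC,
    LinearMap.mk₂_apply, LinearMap.coe_mk, AddHom.coe_mk]
  simp only [Prod.ext_iff, funext_iff]
  refine ⟨by simp, by simp, fun j' => ?_, by simp, fun j' => by simp⟩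
  rcases eq_or_ne j' j with rfl | hj <;> simp [*]

end NormalForm

section Independence

open scoped TensorProduct
open LinearMap

variable {k : Type} [Field k] {n m : ℕ} {V W : Fin m → Submodule k (Fin n → k)}
  {V₀ W₀ : Submodule k (Fin n → k)}

local notation "e₁" => qE1 k n m V W
local notation "e₂" => qE2 k n m V W
local notation "β" => qB k n m V W
local notation "ℓ" => qlc k n m V W

variable (V W V₀ W₀) in
noncomputable def vbwMap (j : Fin m) : V₀ ⊗[k] W₀ →ₗ[k] RF k n m V W :=
  TensorProduct.lift ((mul k _).compl₁₂ (mulRight k (β j) ∘ₗ ℓ) ℓ) ∘ₗ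
    TensorProduct.mapIncl V₀ W₀

theorem VbWsub_eq_range_vbwMap (j : Fin m) :
    VbWsub k n m V W V₀ W₀ j = range (vbwMap V W V₀ W₀ j) := by
  rw [vbwMap, ← TensorProduct.map₂_eq_range_lift_comp_mapIncl, Submodule.map₂_eq_span_image2,
    VbWsub]
  congr 1
  ext x
  simp [Set.image2, eq_comm]

theorem normalForm_vbwMap (hP : ∀ j, IsCompl V₀ (W j)) (hQ : ∀ j, IsCompl W₀ (V j)) (j : Fin m)
    (t : V₀ ⊗[k] W₀) :
    normalForm hP hQ (vbwMap V W V₀ W₀ j t) = (0, 0, Pi.single j t, 0, 0) := by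
  induction t using TensorProduct.induction_on with
  | zero => simp [Prod.ext_iff]
  | tmul v w => simp [vbwMap, normalForm_qlc_mul_qB_mul_qlc]
  | add a b ha hb => simp [ha, hb, Pi.single_add]

theorem iSupIndep_span_qE1_bWsub (hP : ∀ j, IsCompl V₀ (W j)) (hQ : ∀ j, IsCompl W₀ (V j)) :
    iSupIndep fun o : Option (Fin m) => o.elim (Submodule.span k {e₁}) (bWsub k n m V W W₀) := by
  have hbW : bWsub k n m V W W₀ = fun j => range ((mulLeft k (β j) ∘ₗ ℓ) ∘ₗ W₀.subtype) := by
    funext j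
    rw [range_comp, Submodule.range_subtype]
    rfl
  rw [LinearMap.span_singleton_eq_range, hbW]
  refine iSupIndep_option_elim_range _ _ (fst k _ _ ∘ₗ fst k _ _ ∘ₗ normalForm hP hQ)
    (fst k _ _ ∘ₗ snd k _ _ ∘ₗ fst k _ _ ∘ₗ normalForm hP hQ) ?_ ?_ ?_ ?_ <;>
  simp [normalForm_qE1, normalForm_qB_mul_qlc]

theorem iSupIndep_span_qE2_VbSub (hP : ∀ j, IsCompl V₀ (W j)) (hQ : ∀ j, IsCompl W₀ (V j)) :
    iSupIndep fun o : Option (Fin m) => o.elim (Submodule.span k {e₂}) (VbSub k n m V W V₀) := by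
  have hVb : VbSub k n m V W V₀ = fun j => range ((mulRight k (β j) ∘ₗ ℓ) ∘ₗ V₀.subtype) := by
    funext j
    rw [range_comp, Submodule.range_subtype]
    rfl
  rw [LinearMap.span_singleton_eq_range, hVb]
  refine iSupIndep_option_elim_range _ _
    (fst k _ _ ∘ₗ snd k _ _ ∘ₗ snd k _ _ ∘ₗ snd k _ _ ∘ₗ normalForm hP hQ)
    (snd k _ _ ∘ₗ snd k _ _ ∘ₗ snd k _ _ ∘ₗ snd k _ _ ∘ₗ normalForm hP hQ) ?_ ?_ ?_ ?_ <;>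
  simp [normalForm_qE2, normalForm_qlc_mul_qB]

theorem iSupIndep_range_qlc_VbWsub (hP : ∀ j, IsCompl V₀ (W j)) (hQ : ∀ j, IsCompl W₀ (V j)) :
    iSupIndep fun o : Option (Fin m) => o.elim (range ℓ) (VbWsub k n m V W V₀ W₀) := by
  rw [funext (VbWsub_eq_range_vbwMap (V₀ := V₀) (W₀ := W₀) (V := V) (W := W))]
  refine iSupIndep_option_elim_range _ _ (fst k _ _ ∘ₗ snd k _ _ ∘ₗ normalForm hP hQ)
    (fst k _ _ ∘ₗ snd k _ _ ∘ₗ snd k _ _ ∘ₗ normalForm hP hQ) ?_ ?_ ?_ ?_ <;>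
  simp [normalForm_qlc, normalForm_vbwMap]

end Independence

section

variable (k : Type) [Field k] (n m : ℕ) (V W : Fin m → Submodule k (Fin n → k))

theorem stmt_9 (t : ℕ)
    (hVd : ∀ i, Module.finrank k (V i) = t)
    (hWd : ∀ i, Module.finrank k (W i) = n - t)
    (V₀ W₀ : Submodule k (Fin n → k))
    (hV₀d : Module.finrank k V₀ = t) (hW₀d : Module.finrank k W₀ = n - t)
    (hV₀W : ∀ i, V₀ ⊓ W i = ⊥) (hW₀V : ∀ i, W₀ ⊓ V i = ⊥) :
    -- e₁ R_F e₁ = ⟨e₁⟩ ⊕ ⊕_j b_j W₀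
    ((Submodule.span k {qE1 k n m V W} ⊔ ⨆ j, bWsub k n m V W W₀ j)
        = cornerSub k n m V W (qE1 k n m V W) (qE1 k n m V W) ∧
      iSupIndep (fun o : Option (Fin m) =>
        o.elim (Submodule.span k {qE1 k n m V W}) (bWsub k n m V W W₀))) ∧
    -- e₁ R_F e₂ = B
    (cornerSub k n m V W (qE1 k n m V W) (qE2 k n m V W)
        = Submodule.span k (Set.range (qB k n m V W))) ∧
    -- e₂ R_F e₁ = C ⊕ ⊕_j V₀ b_j W₀
    ((LinearMap.range (qlc k n m V W) ⊔ ⨆ j, VbWsub k n m V W V₀ W₀ j)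
        = cornerSub k n m V W (qE2 k n m V W) (qE1 k n m V W) ∧
      iSupIndep (fun o : Option (Fin m) =>
        o.elim (LinearMap.range (qlc k n m V W)) (VbWsub k n m V W V₀ W₀))) ∧
    -- e₂ R_F e₂ = ⟨e₂⟩ ⊕ ⊕_j V₀ b_j
    ((Submodule.span k {qE2 k n m V W} ⊔ ⨆ j, VbSub k n m V W V₀ j)
        = cornerSub k n m V W (qE2 k n m V W) (qE2 k n m V W) ∧
      iSupIndep (fun o : Option (Fin m) =>
        o.elim (Submodule.span k {qE2 k n m V W}) (VbSub k n m V W V₀))) := by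
  have ht : t ≤ n := hV₀d ▸ (Submodule.finrank_le V₀).trans_eq (Module.finrank_fin_fun k)
  have hP (j : Fin m) : IsCompl V₀ (W j) :=
    (Submodule.isCompl_iff_disjoint _ _ (by rw [hV₀d, hWd, Module.finrank_fin_fun k]; omega)).2
      (disjoint_iff.2 (hV₀W j))
  have hQ (j : Fin m) : IsCompl W₀ (V j) :=
    (Submodule.isCompl_iff_disjoint _ _ (by rw [hW₀d, hVd, Module.finrank_fin_fun k]; omega)).2
      (disjoint_iff.2 (hW₀V j))
  have corner := cornerSub_qE_eq_peirceBlock (fun j => (hP j).codisjoint)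
    (fun j => (hQ j).codisjoint)
  exact ⟨⟨(corner 0 0).symm, iSupIndep_span_qE1_bWsub hP hQ⟩, corner 0 1,
    ⟨(corner 1 0).symm, iSupIndep_range_qlc_VbWsub hP hQ⟩,
    ⟨(corner 1 1).symm, iSupIndep_span_qE2_VbSub hP hQ⟩⟩

end
end

section
/- With R_F as above, for any x ∈ C \ W_i there is an isomorphism of right R_F-modules x b_i R_F ≅ b_i R_F, and the right annihilators of x b_i and b_i in R_F are isomorphic as right R_F-modules. -/
/-! Since `rAnn(b_i) ⊆ rAnn(x b_i)`, everything follows from the reverse inclusion: then the two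
annihilators are equal and `x b_i R_F ≅ R_F / rAnn(x b_i) = R_F / rAnn(b_i) ≅ b_i R_F`.

For it, choose a functional `f` on `C` with `f x = 1` vanishing on `W_i`, and let `R_F` act on the
right on `k e₂ ⊕ k ⊕ (k ⊕ C/V_i)`, where the arrow span `C` is collapsed along `f` and the last
summand is a copy of `b_i R_F`, spanned by `b_i` and the `b_i c_v`. The relations `W_i b_i = 0`
survive because `f` kills `W_i`. In this module `e₂ · x b_i = b_i`, and the copy of `b_i R_F`
maps `R_F`-linearly onto `b_i R_F`; hence `x b_i s = 0` forces `b_i s = 0`. -/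

open MulOpposite

theorem Submodule.exists_dual_eq_one_of_notMem {K E : Type*} [Field K] [AddCommGroup E]
    [Module K E] {W : Submodule K E} {u : E} (hu : u ∉ W) :
    ∃ f : Module.Dual K E, W ≤ LinearMap.ker f ∧ f u = 1 := by
  obtain ⟨f, hfu, hW⟩ := W.exists_dual_map_eq_bot_of_notMem hu inferInstance
  refine ⟨(f u)⁻¹ • f, fun w hw => ?_, by simp [hfu]⟩
  simp [show f w = 0 from LinearMap.le_ker_iff_map.2 hW hw]

noncomputable def LinearMap.rangeEquivOfKerEq {R M N₁ N₂ : Type*} [Ring R] [AddCommGroup M]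
    [AddCommGroup N₁] [AddCommGroup N₂] [Module R M] [Module R N₁] [Module R N₂]
    {f : M →ₗ[R] N₁} {g : M →ₗ[R] N₂} (h : LinearMap.ker f = LinearMap.ker g) :
    LinearMap.range f ≃ₗ[R] LinearMap.range g :=
  f.quotKerEquivRange.symm.trans ((Submodule.quotEquivOfEq _ _ h).trans g.quotKerEquivRange)

namespace RF

section Relations

variable {k : Type} [Field k] {n m : ℕ} {V W : Fin m → Submodule k (Fin n → k)}

local notation "e₁" => qE1 k n m V W
local notation "e₂" => qE2 k n m V W
local notation "𝐛" => qB k n m V W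
local notation "𝐜" => qlc k n m V W

theorem induction {P : RF k n m V W → Prop} (algebraMap : ∀ c, P (algebraMap k _ c))
    (e1 : P e₁) (e2 : P e₂) (c : ∀ i, P (qC k n m V W i)) (b : ∀ j, P (𝐛 j))
    (add : ∀ r s, P r → P s → P (r + s)) (mul : ∀ r s, P r → P s → P (r * s))
    (s : RF k n m V W) : P s := by
  obtain ⟨a, rfl⟩ := RingQuot.mkAlgHom_surjective k _ s
  induction a with
  | grade0 c => simpa using algebraMap c
  | grade1 g => cases g <;> first | exact e1 | exact e2 | exact c _ | exact b _
  | mul a b ha hb => simpa using mul _ _ ha hb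
  | add a b ha hb => simpa using add _ _ ha hb

theorem prF_eq_of_relF {x y : FreeAlgebra k (QGen n m)} (h : relF k n m V W x y) :
    prF k n m V W x = prF k n m V W y :=
  RingQuot.mkAlgHom_rel k h

theorem qlc_eq_sum (v : Fin n → k) : 𝐜 v = ∑ i, v i • qC k n m V W i := by
  simp [qlc, glc, qC, map_sum]

theorem qlc_single_one (i : Fin n) : 𝐜 (Pi.single i 1) = qC k n m V W i := by
  simp [qlc_eq_sum, Pi.single_apply]

theorem qE2_mul_qE1 : e₂ * e₁ = 0 := by
  simpa [qE1, qE2] using prF_eq_of_relF (relF.orth21 (k := k) (V := V) (W := W))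

theorem qE1_mul_qE2 : e₁ * e₂ = 0 := by
  simpa [qE1, qE2] using prF_eq_of_relF (relF.orth12 (k := k) (V := V) (W := W))

theorem qB_mul_qE2 (j : Fin m) : 𝐛 j * e₂ = 𝐛 j := by
  simpa [qB, qE2] using prF_eq_of_relF (relF.bRight (k := k) (V := V) (W := W) j)

theorem qE1_mul_qB (j : Fin m) : e₁ * 𝐛 j = 𝐛 j := by
  simpa [qB, qE1] using prF_eq_of_relF (relF.bLeft (k := k) (V := V) (W := W) j)

theorem qC_mul_qE1 (i : Fin n) : qC k n m V W i * e₁ = qC k n m V W i := by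
  simpa [qC, qE1] using prF_eq_of_relF (relF.cRight (k := k) (V := V) (W := W) i)

theorem qE2_mul_qC (i : Fin n) : e₂ * qC k n m V W i = qC k n m V W i := by
  simpa [qC, qE2] using prF_eq_of_relF (relF.cLeft (k := k) (V := V) (W := W) i)

theorem qB_mul_qC_mul_qB (i : Fin n) (j j' : Fin m) : 𝐛 j * qC k n m V W i * 𝐛 j' = 0 := by
  simpa [qB, qC] using prF_eq_of_relF (relF.bcb (k := k) (V := V) (W := W) i j j')

theorem qB_mul_qlc_of_mem {j : Fin m} {v : Fin n → k} (hv : v ∈ V j) : 𝐛 j * 𝐜 v = 0 := by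
  simpa [qB, qlc] using prF_eq_of_relF (relF.bv (k := k) (V := V) (W := W) j v hv)

theorem qB_mul_qE1 (j : Fin m) : 𝐛 j * e₁ = 0 := by
  rw [← qB_mul_qE2, mul_assoc, qE2_mul_qE1, mul_zero]

theorem qB_mul_qB (j j' : Fin m) : 𝐛 j * 𝐛 j' = 0 := by
  rw [← qB_mul_qE2 j, ← qE1_mul_qB j', mul_assoc, ← mul_assoc e₂, qE2_mul_qE1, zero_mul,
    mul_zero]

theorem qlc_mul_qE1 (v : Fin n → k) : 𝐜 v * e₁ = 𝐜 v := by
  simp [qlc_eq_sum, Finset.sum_mul, qC_mul_qE1]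

theorem qlc_mul_qE2 (v : Fin n → k) : 𝐜 v * e₂ = 0 := by
  rw [← qlc_mul_qE1, mul_assoc, qE1_mul_qE2, mul_zero]

theorem qlc_mul_qC (v : Fin n → k) (i : Fin n) : 𝐜 v * qC k n m V W i = 0 := by
  rw [← qlc_mul_qE1, ← qE2_mul_qC, mul_assoc, ← mul_assoc e₁, qE1_mul_qE2, zero_mul, mul_zero]

theorem qB_mul_qlc_mul_qB (j j' : Fin m) (v : Fin n → k) : 𝐛 j * 𝐜 v * 𝐛 j' = 0 := by
  simp [qlc_eq_sum, Finset.mul_sum, Finset.sum_mul, qB_mul_qC_mul_qB]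

end Relations

section Model

variable {k : Type} [Field k] {n m : ℕ} (V W : Fin m → Submodule k (Fin n → k)) (i : Fin m)
  (f : Module.Dual k (Fin n → k))

/-- `((a, p), (t, [v]))` stands for `a e₂ + p c + t b_i + b_i c_v`, where `c ∈ C` is any arrow
combination with `f c = 1`; an arrow combination `c_v` is identified with `f v • c`. -/
abbrev Model := (k × k) × (k × ((Fin n → k) ⧸ V i))

def Model.e₁ : Module.End k (Model V i) :=
  (LinearMap.prodMap 0 LinearMap.id).prodMap (LinearMap.prodMap 0 LinearMap.id)

def Model.e₂ : Module.End k (Model V i) :=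
  (LinearMap.prodMap LinearMap.id 0).prodMap (LinearMap.prodMap LinearMap.id 0)

def Model.c : (Fin n → k) →ₗ[k] Module.End k (Model V i) :=
  LinearMap.mk₂ k (fun v x => ((0, x.1.1 • f v), (0, x.2.1 • (V i).mkQ v)))
    (fun v v' x => by ext <;> simp [smul_add, mul_add])
    (fun c v x => by ext <;> simp [smul_comm c, mul_left_comm])
    (fun v x y => by ext <;> simp [add_smul, add_mul])
    (fun c v x => by ext <;> simp [mul_smul, mul_assoc])

def Model.b (j : Fin m) : Module.End k (Model V i) :=
  if j = i then LinearMap.inr k _ _ ∘ₗ LinearMap.inl k _ _ ∘ₗ LinearMap.snd k k k ∘ₗ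
    LinearMap.fst k _ _ else 0

def Model.gen : QGen n m → Module.End k (Model V i)
  | .e1 => Model.e₁ V i
  | .e2 => Model.e₂ V i
  | .c i' => Model.c V i f (Pi.single i' 1)
  | .b j => Model.b V i j

/-- Right actions are encoded as algebra maps into the opposite of the endomorphism algebra. -/
noncomputable def Model.freeRep :
    FreeAlgebra k (QGen n m) →ₐ[k] (Module.End k (Model V i))ᵐᵒᵖ :=
  FreeAlgebra.lift k fun g => op (Model.gen V i f g)

variable {V i f}

@[simp] theorem Model.e₁_apply (x : Model V i) : Model.e₁ V i x = ((0, x.1.2), (0, x.2.2)) :=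
  rfl

@[simp] theorem Model.e₂_apply (x : Model V i) : Model.e₂ V i x = ((x.1.1, 0), (x.2.1, 0)) :=
  rfl

@[simp] theorem Model.c_apply (v : Fin n → k) (x : Model V i) :
    Model.c V i f v x = ((0, x.1.1 • f v), (0, x.2.1 • (V i).mkQ v)) :=
  rfl

@[simp] theorem Model.b_apply (j : Fin m) (x : Model V i) :
    Model.b V i j x = ((0, 0), (if j = i then x.1.2 else 0, 0)) := by
  unfold Model.b; split_ifs <;> rfl

@[simp] theorem Model.freeRep_gE1 : Model.freeRep V i f (gE1 k n m) = op (Model.e₁ V i) :=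
  FreeAlgebra.lift_ι_apply _ _

@[simp] theorem Model.freeRep_gE2 : Model.freeRep V i f (gE2 k n m) = op (Model.e₂ V i) :=
  FreeAlgebra.lift_ι_apply _ _

@[simp] theorem Model.freeRep_gC (i' : Fin n) :
    Model.freeRep V i f (gC k n m i') = op (Model.c V i f (Pi.single i' 1)) :=
  FreeAlgebra.lift_ι_apply _ _

@[simp] theorem Model.freeRep_gB (j : Fin m) :
    Model.freeRep V i f (gB k n m j) = op (Model.b V i j) :=
  FreeAlgebra.lift_ι_apply _ _

theorem Model.freeRep_glc (v : Fin n → k) :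
    Model.freeRep V i f (glc k n m v) = op (Model.c V i f v) := by
  conv_rhs => rw [← Finset.univ_sum_single v]
  simp only [glc, gC, Model.freeRep, map_sum, LinearMap.sum_apply, Finset.op_sum,
    LinearMap.comp_apply, LinearMap.toSpanSingleton_apply, LinearMap.proj_apply]
  refine Finset.sum_congr rfl fun j _ => ?_
  rw [map_smul, FreeAlgebra.lift_ι_apply, ← op_smul, Model.gen, ← map_smul, ← Pi.single_smul',
    smul_eq_mul, mul_one]

theorem Model.freeRep_eq_of_relF (hf : W i ≤ LinearMap.ker f) ⦃x y : FreeAlgebra k (QGen n m)⦄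
    (h : relF k n m V W x y) : Model.freeRep V i f x = Model.freeRep V i f y := by
  apply unop_injective
  refine LinearMap.ext fun z => ?_
  cases h with
  | wb j w hw =>
    obtain rfl | hj := eq_or_ne j i
    · simp [Model.freeRep_glc, show f w = 0 from hf hw]
    · simp [Model.freeRep_glc, hj]
  | bv j v hv =>
    obtain rfl | hj := eq_or_ne j i
    · simp [Model.freeRep_glc, (Submodule.Quotient.mk_eq_zero _).2 hv]
    · simp [Model.freeRep_glc, hj]
  | _ => simp

noncomputable def Model.rep (hf : W i ≤ LinearMap.ker f) :
    RF k n m V W →ₐ[k] (Module.End k (Model V i))ᵐᵒᵖ :=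
  RingQuot.liftAlgHom k ⟨Model.freeRep V i f, Model.freeRep_eq_of_relF W hf⟩

variable (hf : W i ≤ LinearMap.ker f)

@[simp] theorem Model.rep_prF (x : FreeAlgebra k (QGen n m)) :
    Model.rep W hf (prF k n m V W x) = Model.freeRep V i f x :=
  RingQuot.liftAlgHom_mkAlgHom_apply _ _ _ _

@[simp] theorem Model.rep_qE1 : Model.rep W hf (qE1 k n m V W) = op (Model.e₁ V i) := by
  simp [qE1]

@[simp] theorem Model.rep_qE2 : Model.rep W hf (qE2 k n m V W) = op (Model.e₂ V i) := by
  simp [qE2]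

@[simp] theorem Model.rep_qC (i' : Fin n) :
    Model.rep W hf (qC k n m V W i') = op (Model.c V i f (Pi.single i' 1)) := by
  simp [qC]

@[simp] theorem Model.rep_qB (j : Fin m) :
    Model.rep W hf (qB k n m V W j) = op (Model.b V i j) := by
  simp [qB]

theorem Model.rep_qlc (v : Fin n → k) :
    Model.rep W hf (qlc k n m V W v) = op (Model.c V i f v) :=
  (Model.rep_prF W hf _).trans (Model.freeRep_glc v)

variable (V i) in
noncomputable def Model.toRF : k × ((Fin n → k) ⧸ V i) →ₗ[k] RF k n m V W :=
  (LinearMap.toSpanSingleton k _ (qB k n m V W i)).coprod <| (V i).liftQ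
    (LinearMap.mulLeft k (qB k n m V W i) ∘ₗ qlc k n m V W) fun _ hv => qB_mul_qlc_of_mem hv

@[simp] theorem Model.toRF_mk (t : k) (v : Fin n → k) :
    Model.toRF V W i (t, Submodule.Quotient.mk v) =
      t • qB k n m V W i + qB k n m V W i * qlc k n m V W v :=
  rfl

@[simp] theorem Model.toRF_inl (t : k) : Model.toRF V W i (t, 0) = t • qB k n m V W i := by
  simp [Model.toRF]

theorem Model.exists_rep_apply_inr (s : RF k n m V W) (y : k × ((Fin n → k) ⧸ V i)) :
    ∃ y', (Model.rep W hf s).unop (0, y) = (0, y') ∧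
      Model.toRF V W i y' = Model.toRF V W i y * s := by
  induction s using RF.induction generalizing y with
  | algebraMap c =>
    refine ⟨c • y, by simp, ?_⟩
    rw [map_smul, Algebra.smul_def, Algebra.commutes]
  | e1 =>
    obtain ⟨t, q⟩ := y
    obtain ⟨v, rfl⟩ := Submodule.Quotient.mk_surjective _ q
    simp [add_mul, mul_assoc, qB_mul_qE1, qlc_mul_qE1]
  | e2 =>
    obtain ⟨t, q⟩ := y
    obtain ⟨v, rfl⟩ := Submodule.Quotient.mk_surjective _ q
    simp [add_mul, mul_assoc, qB_mul_qE2, qlc_mul_qE2]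
  | c i' =>
    obtain ⟨t, q⟩ := y
    obtain ⟨v, rfl⟩ := Submodule.Quotient.mk_surjective _ q
    simp [← Submodule.Quotient.mk_smul, add_mul, mul_assoc, qlc_mul_qC, qlc_single_one]
  | b j =>
    obtain ⟨t, q⟩ := y
    obtain ⟨v, rfl⟩ := Submodule.Quotient.mk_surjective _ q
    simp [add_mul, qB_mul_qB, qB_mul_qlc_mul_qB]
  | add r s hr hs =>
    obtain ⟨yr, hyr, hr⟩ := hr y
    obtain ⟨ys, hys, hs⟩ := hs y
    exact ⟨yr + ys, by simp [hyr, hys], by rw [map_add, hr, hs, mul_add]⟩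
  | mul r s hr hs =>
    obtain ⟨yr, hyr, hr⟩ := hr y
    obtain ⟨ys, hys, hs⟩ := hs yr
    exact ⟨ys, by simp [hyr, hys], by rw [hs, hr, mul_assoc]⟩

end Model

variable {k : Type} [Field k] {n m : ℕ} {V W : Fin m → Submodule k (Fin n → k)} {i : Fin m}
  {u : Fin n → k}

theorem qB_mul_eq_zero_of_qlc_mul_qB_mul_eq_zero (hu : u ∉ W i) {s : RF k n m V W}
    (hs : qlc k n m V W u * qB k n m V W i * s = 0) : qB k n m V W i * s = 0 := by
  obtain ⟨f, hf, hfu⟩ := Submodule.exists_dual_eq_one_of_notMem hu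
  obtain ⟨y, hy, hys⟩ := Model.exists_rep_apply_inr W hf s (1, 0)
  have hxb : (Model.rep W hf (qlc k n m V W u * qB k n m V W i)).unop ((1, 0), (0, 0)) =
      (0, (1, 0)) := by
    simp [Model.rep_qlc, hfu]
  have hy0 : y = 0 := by
    have := congrArg (fun r => (Model.rep W hf r).unop ((1, 0), (0, 0))) hs
    rw [map_mul, unop_mul, Module.End.mul_apply, hxb, hy] at this
    simpa using this
  simpa [hy0] using hys.symm

theorem ker_rmul_qlc_mul_qB (hu : u ∉ W i) :
    LinearMap.ker (rmul k n m V W (qlc k n m V W u * qB k n m V W i)) =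
      LinearMap.ker (rmul k n m V W (qB k n m V W i)) := by
  ext s
  change qlc k n m V W u * qB k n m V W i * s = 0 ↔ qB k n m V W i * s = 0
  exact ⟨qB_mul_eq_zero_of_qlc_mul_qB_mul_eq_zero hu, fun h => by rw [mul_assoc, h, mul_zero]⟩

end RF


/-- For `R_F = kQ_{n,m}/I_F` and any `x ∈ C \ W i` (written `x = ∑ u i • c i` with
`u ∉ W i`), there are isomorphisms of right `R_F`-modules `x b_i R_F ≅ b_i R_F` and
`rAnn(x b_i) ≅ rAnn(b_i)`.  (The right ideal `r·R_F` is the range, and the right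
annihilator of `r` the kernel, of left multiplication `rmul r` viewed as an endomorphism
of `R_F` as a right module over itself.) -/
theorem stmt_10 (k : Type) [Field k] (n m : ℕ)
    (V W : Fin m → Submodule k (Fin n → k))
    (i : Fin m) (u : Fin n → k) (hu : u ∉ W i) :
    Nonempty
      (↥(LinearMap.range (rmul k n m V W (qlc k n m V W u * qB k n m V W i))) ≃ₗ[(RF k n m V W)ᵐᵒᵖ]
       ↥(LinearMap.range (rmul k n m V W (qB k n m V W i)))) ∧
    Nonempty
      (↥(LinearMap.ker (rmul k n m V W (qlc k n m V W u * qB k n m V W i))) ≃ₗ[(RF k n m V W)ᵐᵒᵖ]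
       ↥(LinearMap.ker (rmul k n m V W (qB k n m V W i)))) := by
  exact ⟨⟨LinearMap.rangeEquivOfKerEq (RF.ker_rmul_qlc_mul_qB hu)⟩,
    ⟨LinearEquiv.ofEq _ _ (RF.ker_rmul_qlc_mul_qB hu)⟩⟩
end

section
/- For all integers m ≥ 1 and n > t ≥ 1, the binary quadratic form q(x,y) = (m(n−t)+1)x² + (mt(n−t)+m+n)xy + (mt+1)y² does not represent 1, i.e., there are no integers x, y with q(x,y) = 1. -/
set_option maxHeartbeats 1000000

lemma aux_one_le_sq {d : ℤ} (h : d ≠ 0) : 1 ≤ d^2 := by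
  rcases lt_or_gt_of_ne h with h1 | h1 <;> nlinarith

lemma aux_no_sq {A X : ℤ} (hA : 2 ≤ A) (h : X^2 = A) (hd : A ∣ X) : False := by
  obtain ⟨d, rfl⟩ := hd
  rcases eq_or_ne d 0 with rfl | hd0
  · simp at h; nlinarith
  · have h1 : 1 ≤ d^2 := aux_one_le_sq hd0
    nlinarith [sq_nonneg A, mul_nonneg (sub_nonneg.2 h1) (sq_nonneg A)]

/-- Vieta descent: no solution of `X² + wXY + Y² = A` with `A ∣ X - μY`,
    when `2 ≤ A ≤ w - 2` and `A ∣ μ² + wμ + 1`. -/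
lemma aux_descent (A w μ : ℤ) (hA : 2 ≤ A) (hw : A + 2 ≤ w) (hμ : A ∣ μ^2 + w*μ + 1) :
    ∀ N : ℕ, ∀ X Y : ℤ, X.natAbs + Y.natAbs ≤ N → 1 ≤ X → Y ≤ -1 →
      X^2 + w*X*Y + Y^2 = A → A ∣ X - μ*Y → False := by
  obtain ⟨f, hf⟩ := hμ
  have hco : IsCoprime A μ := ⟨f, -(μ+w), by linear_combination -hf⟩
  intro N
  induction N with
  | zero => intro X Y hmeas hX hY _ _; omega
  | succ n IH =>
    intro X Y hmeas hX hY heq hdvd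
    obtain ⟨e, he⟩ := hdvd
    rcases lt_trichotomy X (-Y) with hlt | heqc | hgt
    · -- X < -Y : transform (X,Y) ↦ (w*X+Y, -X)
      have heq' : (w*X+Y)^2 + w*(w*X+Y)*(-X) + (-X)^2 = A := by linear_combination heq
      have hdvd' : A ∣ (w*X+Y) - μ*(-X) :=
        ⟨(w+μ)*e + f*Y, by linear_combination (w+μ)*he + Y*hf⟩
      have hY'le : (-X : ℤ) ≤ -1 := by omega
      rcases lt_trichotomy (w*X+Y) 0 with h1 | h1 | h1
      · -- both coordinates negative: value ≥ w + 2 > A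
        have hp0 : (1:ℤ)*1 ≤ (-(w*X+Y)) * X :=
          mul_le_mul (by linarith) (by linarith) (by norm_num) (by linarith)
        have hp : 1 ≤ (w*X+Y) * (-X) := by nlinarith [hp0]
        nlinarith [aux_one_le_sq (show (w*X+Y) ≠ 0 by omega),
          aux_one_le_sq (show (-X : ℤ) ≠ 0 by omega),
          mul_nonneg (by linarith : (0:ℤ) ≤ w) (by linarith : (0:ℤ) ≤ (w*X+Y)*(-X) - 1)]
      · -- w*X+Y = 0 : then X² = A and A ∣ X
        have hsq : X^2 = A := by nlinarith [heq']
        have hdX : A ∣ μ * X := by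
          have : (w*X+Y) - μ*(-X) = μ * X := by rw [h1]; ring
          rwa [this] at hdvd'
        exact aux_no_sq hA hsq (hco.dvd_of_dvd_mul_left hdX)
      · -- recurse with smaller pair
        have key : (-Y) * (w*X+Y) = X^2 - A := by linear_combination -heq
        have hYY : X^2 < (-Y)*(-Y) := by
          nlinarith [mul_pos (show (0:ℤ) < -Y-X by linarith) (show (0:ℤ) < -Y+X by linarith)]
        have hlt2 : (-Y) * (w*X+Y) < (-Y) * (-Y) := by nlinarith [key, hYY, hA]
        have hX'Y : (w*X+Y) < -Y := lt_of_mul_lt_mul_left hlt2 (by linarith)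
        have hmeas' : (w*X+Y).natAbs + (-X : ℤ).natAbs ≤ n := by omega
        exact IH (w*X+Y) (-X) hmeas' (by omega) hY'le heq' hdvd'
    · -- X = -Y
      have hYX : Y = -X := by linarith
      subst hYX
      nlinarith [aux_one_le_sq (show X ≠ 0 by omega),
        mul_nonneg (by linarith : (0:ℤ) ≤ w - 2)
          (by nlinarith [aux_one_le_sq (show X ≠ 0 by omega)] : (0:ℤ) ≤ X^2 - 1)]
    · -- X > -Y : transform (X,Y) ↦ (-Y, X+w*Y)
      have heq' : (-Y)^2 + w*(-Y)*(X+w*Y) + (X+w*Y)^2 = A := by linear_combination heq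
      have hdvd' : A ∣ (-Y) - μ*(X+w*Y) :=
        ⟨-μ*e - f*Y, by linear_combination -μ*he - Y*hf⟩
      have hX'pos : (1:ℤ) ≤ -Y := by omega
      rcases lt_trichotomy (X+w*Y) 0 with h1 | h1 | h1
      · -- recurse with smaller pair
        have key : X * (-(X+w*Y)) = Y^2 - A := by linear_combination -heq
        have hYY : Y^2 < X*X := by
          nlinarith [mul_pos (show (0:ℤ) < X+Y by linarith) (show (0:ℤ) < X-Y by linarith)]
        have hlt2 : X * (-(X+w*Y)) < X * X := by nlinarith [key, hYY, hA]
        have hX'Y : -(X+w*Y) < X := lt_of_mul_lt_mul_left hlt2 (by linarith)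
        have hmeas' : (-Y : ℤ).natAbs + (X+w*Y).natAbs ≤ n := by omega
        exact IH (-Y) (X+w*Y) hmeas' hX'pos (by omega) heq' hdvd'
      · -- X+w*Y = 0 : then Y² = A and A ∣ -Y
        have hsq : (-Y)^2 = A := by nlinarith [heq']
        have hdX : A ∣ -Y := by
          have : (-Y) - μ*(X+w*Y) = -Y := by rw [h1]; ring
          rwa [this] at hdvd'
        exact aux_no_sq hA hsq hdX
      · -- both coordinates positive: value ≥ w + 2 > A
        have hp0 : (1:ℤ)*1 ≤ (-Y) * (X+w*Y) :=
          mul_le_mul (by linarith) (by linarith) (by norm_num) (by linarith)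
        have hp : 1 ≤ (-Y) * (X+w*Y) := by linarith [hp0]
        nlinarith [aux_one_le_sq (show (-Y : ℤ) ≠ 0 by omega),
          aux_one_le_sq (show (X+w*Y) ≠ 0 by omega),
          mul_nonneg (by linarith : (0:ℤ) ≤ w) (by linarith : (0:ℤ) ≤ (-Y)*(X+w*Y) - 1)]

lemma aux_represent (A w μ : ℤ) (hA : 2 ≤ A) (hw : A + 2 ≤ w) (hμ : A ∣ μ^2 + w*μ + 1)
    (X Y : ℤ) (heq : X^2 + w*X*Y + Y^2 = A) (hdvd : A ∣ X - μ*Y) : False := by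
  obtain ⟨f, hf⟩ := hμ
  have hco : IsCoprime A μ := ⟨f, -(μ+w), by linear_combination -hf⟩
  rcases eq_or_ne Y 0 with rfl | hY0
  · have hsq : X^2 = A := by nlinarith [heq]
    have : A ∣ X := by simpa using hdvd
    exact aux_no_sq hA hsq this
  rcases eq_or_ne X 0 with rfl | hX0
  · have hsq : Y^2 = A := by nlinarith [heq]
    have h1 : A ∣ μ * Y := by
      have : A ∣ -(0 - μ*Y) := dvd_neg.2 hdvd
      simpa using this
    exact aux_no_sq hA hsq (hco.dvd_of_dvd_mul_left h1)
  have hμdvd : A ∣ μ^2 + w*μ + 1 := ⟨f, hf⟩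
  rcases lt_or_gt_of_ne hX0 with hXneg | hXpos
  · rcases lt_or_gt_of_ne hY0 with hYneg | hYpos
    · -- both negative : value ≥ w + 2 > A
      have hp0 : (1:ℤ)*1 ≤ (-X) * (-Y) :=
        mul_le_mul (by linarith) (by linarith) (by norm_num) (by linarith)
      have hp : 1 ≤ X * Y := by nlinarith [hp0]
      nlinarith [aux_one_le_sq hX0, aux_one_le_sq hY0,
        mul_nonneg (by linarith : (0:ℤ) ≤ w) (by linarith : (0:ℤ) ≤ X*Y - 1)]
    · -- X < 0 < Y : apply descent to (-X, -Y)
      have heq' : (-X)^2 + w*(-X)*(-Y) + (-Y)^2 = A := by linear_combination heq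
      obtain ⟨e, he⟩ := hdvd
      have hdvd' : A ∣ (-X) - μ*(-Y) := ⟨-e, by linear_combination -he⟩
      exact aux_descent A w μ hA hw hμdvd ((-X:ℤ).natAbs + (-Y:ℤ).natAbs) (-X) (-Y)
        le_rfl (by omega) (by omega) heq' hdvd'
  · rcases lt_or_gt_of_ne hY0 with hYneg | hYpos
    · exact aux_descent A w μ hA hw hμdvd (X.natAbs + Y.natAbs) X Y
        le_rfl (by omega) (by omega) heq hdvd
    · -- both positive
      have hp0 : (1:ℤ)*1 ≤ X * Y :=
        mul_le_mul (by linarith) (by linarith) (by norm_num) (by linarith)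
      have hp : 1 ≤ X * Y := by linarith [hp0]
      nlinarith [aux_one_le_sq hX0, aux_one_le_sq hY0,
        mul_nonneg (by linarith : (0:ℤ) ≤ w) (by linarith : (0:ℤ) ≤ X*Y - 1)]

/-- The Euler quadratic form of `R_F` does not represent 1. -/
theorem stmt_19 (m n t : ℤ) (hm : 1 ≤ m) (ht : 1 ≤ t) (htn : t < n) :
    ∀ x y : ℤ, (m*(n-t)+1)*x^2 + (m*t*(n-t)+m+n)*x*y + (m*t+1)*y^2 ≠ 1 := by
  obtain ⟨s, hs, rfl⟩ : ∃ s : ℤ, 1 ≤ s ∧ n = t + s := ⟨n - t, by omega, by omega⟩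
  intro x y h
  have hms : (1:ℤ) ≤ m * s := by nlinarith
  have hmt : (1:ℤ) ≤ m * t := by nlinarith
  rcases eq_or_lt_of_le ht with ht1 | ht2
  · rcases eq_or_lt_of_le hs with hs1 | hs2
    · -- s = t = 1 : form is (m+1)(x+y)²
      have h2 : (m+1) * (x+y)^2 = 1 := by
        rw [← ht1, ← hs1] at h; linear_combination h
      rcases eq_or_ne (x+y) 0 with h0 | h0
      · rw [h0] at h2; simp at h2
      · nlinarith [aux_one_le_sq h0]
    · -- t = 1, s ≥ 2 : use A = m*t+1
      refine aux_represent (m*t+1) (m*s*t+s+t-m) m (by linarith)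
        ?_ ⟨m*s+1, by ring⟩ ((m*t+1)*y + m*x) x ?_ ⟨y, by ring⟩
      · have h3 : (0:ℤ) ≤ (m+1)*(s-2) := mul_nonneg (by linarith) (by linarith)
        have ht1' : t = 1 := ht1.symm
        subst ht1'
        nlinarith [h3]
      · linear_combination (m*t+1) * h
  · -- t ≥ 2 : use A = m*s+1
    refine aux_represent (m*s+1) (m*s*t+s+t-m) m (by linarith)
      ?_ ⟨m*t+1, by ring⟩ ((m*s+1)*x + m*y) y ?_ ⟨x, by ring⟩
    · have h1 : (1:ℤ) ≤ s*(t-1) := by nlinarith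
      have h3 : (0:ℤ) ≤ m*(s*(t-1)-1) := mul_nonneg (by linarith) (by linarith)
      nlinarith [h3]
    · linear_combination (m*s+1) * h
end
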